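/- arXiv:2403.00201 — 4 statements merged into one kernel-verified Lean document; each statement's English description precedes it below -/
import Mathlib

section
/- If an L-formula φ is falsifiable (respectively, satisfiable) on some CS4 frame, then φ is falsifiable (respectively, satisfiable) on some CS4 frame whose set of worlds is finite. That is, the logic CS4 has the finite frame property. -/
universe u

/-- Formulas of the intuitionistic modal language `L`, with a countably infinite
set of propositional variables indexed by `ℕ`. -/
inductive Fml : Type where
  | var : ℕ → Fml
  | bot : Fml
  | and : Fml → Fml → Fml
  | or : Fml → Fml → Fml
  | imp : Fml → Fml → Fml
  | dia : Fml → Fml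
  | box : Fml → Fml
  deriving DecidableEq

/-- A birelational structure: a set of worlds, a set of fallible worlds, an
intuitionistic relation `le` (`≼`), a modal relation `sq` (`⊑`) and a valuation. -/
structure KModel : Type (u + 1) where
  W : Type u
  fallible : Set W
  le : W → W → Prop
  sq : W → W → Prop
  val : ℕ → Set W

namespace KModel

/-- The satisfaction relation. -/
def Sat (M : KModel.{u}) : Fml → M.W → Prop
  | .var p, w => w ∈ M.val p
  | .bot, w => w ∈ M.fallible
  | .and φ ψ, w => Sat M φ w ∧ Sat M ψ w
  | .or φ ψ, w => Sat M φ w ∨ Sat M ψ w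
  | .imp φ ψ, w => ∀ v, M.le w v → Sat M φ v → Sat M ψ v
  | .dia φ, w => ∀ u, M.le w u → ∃ v, M.sq u v ∧ Sat M φ v
  | .box φ, w => ∀ u v, M.le w u → M.sq u v → Sat M φ v

/-- `M` is a bi-intuitionistic model: both relations are preorders, the set of
fallible worlds is closed under both relations, and the valuation is
`≼`-monotone and contains the fallible worlds. -/
def IsBiInt (M : KModel.{u}) : Prop :=
  (∀ w, M.le w w) ∧ (∀ u v w, M.le u v → M.le v w → M.le u w) ∧
  (∀ w, M.sq w w) ∧ (∀ u v w, M.sq u v → M.sq v w → M.sq u w) ∧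
  (∀ w v, w ∈ M.fallible → M.le w v → v ∈ M.fallible) ∧
  (∀ w v, w ∈ M.fallible → M.sq w v → v ∈ M.fallible) ∧
  (∀ p w v, w ∈ M.val p → M.le w v → v ∈ M.val p) ∧
  (∀ p w, w ∈ M.fallible → w ∈ M.val p)

/-- `⊑` is forth–up confluent for `≼`. -/
def ForthUp (M : KModel.{u}) : Prop :=
  ∀ w w' v, M.le w w' → M.sq w v → ∃ v', M.le v v' ∧ M.sq w' v'

/-- `⊑` is back–up confluent for `≼`. -/
def BackUp (M : KModel.{u}) : Prop :=
  ∀ w v v', M.sq w v → M.le v v' → ∃ w', M.le w w' ∧ M.sq w' v'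

/-- `⊑` is forth–down confluent for `≼`. -/
def ForthDown (M : KModel.{u}) : Prop :=
  ∀ w v v', M.le w v → M.sq v v' → ∃ w', M.sq w w' ∧ M.le w' v'

/-- `≼` is upward linear. -/
def UpLinear (M : KModel.{u}) : Prop :=
  ∀ w u v, M.le w u → M.le w v → M.le u v ∨ M.le v u

/-- There are no fallible worlds. -/
def Infallible (M : KModel.{u}) : Prop := M.fallible = ∅

/-- CS4 frames: back–up confluent bi-intuitionistic frames. -/
def IsCS4 (M : KModel.{u}) : Prop := M.IsBiInt ∧ M.BackUp

/-- IS4 frames: forth–up confluent infallible CS4 frames. -/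
def IsIS4 (M : KModel.{u}) : Prop := M.IsCS4 ∧ M.ForthUp ∧ M.Infallible

/-- GS4 frames: upward-linear IS4 frames. -/
def IsGS4 (M : KModel.{u}) : Prop := M.IsIS4 ∧ M.UpLinear

/-- GS4c frames: forth–down confluent GS4 frames. -/
def IsGS4c (M : KModel.{u}) : Prop := M.IsGS4 ∧ M.ForthDown

/-- S4I frames: forth–up and forth–down confluent infallible bi-intuitionistic frames. -/
def IsS4I (M : KModel.{u}) : Prop :=
  M.IsBiInt ∧ M.ForthUp ∧ M.ForthDown ∧ M.Infallible

end KModel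

/-!
Filtrate the CS4 model through the subformulas `S` of `φ`: worlds are the `S`-types of worlds,
ordered by inclusion, and `⊑` only has to carry boxed formulas and `⊥` forward. Back–up
confluence of the original model makes boxed formulas persist along `⊑`, which gives the truth
lemma for `□`, and back–up confluence of the filtration is then immediate.

A type does not determine which `⊑`-successors its worlds have, so to reflect a failure of `◇ψ`
a world of the filtration may also carry a formula refuted at every `⊑`-successor of a world
realizing it, which `⊑` in the filtration must preserve.
-/

def Fml.subformulas : Fml → Finset Fml
  | .var p => {.var p}
  | .bot => {.bot}
  | .and α β => insert (.and α β) (α.subformulas ∪ β.subformulas)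
  | .or α β => insert (.or α β) (α.subformulas ∪ β.subformulas)
  | .imp α β => insert (.imp α β) (α.subformulas ∪ β.subformulas)
  | .dia α => insert (.dia α) α.subformulas
  | .box α => insert (.box α) α.subformulas

theorem Fml.mem_subformulas_self (ψ : Fml) : ψ ∈ ψ.subformulas := by
  cases ψ <;> simp [Fml.subformulas]

theorem Fml.mem_of_subformulas_subset {ψ : Fml} {S : Set Fml} (h : ↑ψ.subformulas ⊆ S) :
    ψ ∈ S :=
  h ψ.mem_subformulas_self

namespace KModel

variable {M : KModel.{u}}

theorem IsBiInt.le_refl (hM : M.IsBiInt) (w : M.W) : M.le w w := hM.1 w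

theorem IsBiInt.sq_refl (hM : M.IsBiInt) (w : M.W) : M.sq w w := hM.2.2.1 w

theorem IsBiInt.sq_trans (hM : M.IsBiInt) {u v w : M.W} (huv : M.sq u v) (hvw : M.sq v w) :
    M.sq u w :=
  hM.2.2.2.1 u v w huv hvw

theorem IsBiInt.mem_fallible_of_sq (hM : M.IsBiInt) {v w : M.W} (hv : v ∈ M.fallible)
    (hvw : M.sq v w) : w ∈ M.fallible :=
  hM.2.2.2.2.2.1 v w hv hvw

theorem IsBiInt.mem_val_of_mem_fallible (hM : M.IsBiInt) (p : ℕ) {w : M.W}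
    (hw : w ∈ M.fallible) : w ∈ M.val p :=
  hM.2.2.2.2.2.2.2 p w hw

theorem sat_mono (hM : M.IsBiInt) :
    ∀ (ψ : Fml) {v w : M.W}, M.le v w → M.Sat ψ v → M.Sat ψ w := by
  obtain ⟨-, hle_trans, -, -, hfallible_le, -, hval_le, -⟩ := hM
  intro ψ
  induction ψ with
  | var p => exact fun h hs => hval_le _ _ _ hs h
  | bot => exact fun h hs => hfallible_le _ _ hs h
  | and α β ihα ihβ => exact fun h hs => ⟨ihα h hs.1, ihβ h hs.2⟩
  | or α β ihα ihβ => exact fun h hs => hs.imp (ihα h) (ihβ h)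
  | imp α β => exact fun h hs u hu => hs u (hle_trans _ _ _ h hu)
  | dia α => exact fun h hs u hu => hs u (hle_trans _ _ _ h hu)
  | box α => exact fun h hs u z hu => hs u z (hle_trans _ _ _ h hu)

theorem sat_box_of_sq (hM : M.IsCS4) {χ : Fml} {v z : M.W} (hv : M.Sat (.box χ) v)
    (hvz : M.sq v z) : M.Sat (.box χ) z := by
  intro u t hzu hut
  obtain ⟨v', hvv', hv'u⟩ := hM.2 v z u hvz hzu
  exact hv v' t hvv' (hM.1.sq_trans hv'u hut)

variable (M) (S : Set Fml)

def typeOf (v : M.W) : Set Fml := {ψ | ψ ∈ S ∧ M.Sat ψ v}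

def Realizes (v : M.W) (Γ : Set Fml) (c : Option Fml) : Prop :=
  Γ = M.typeOf S v ∧ ∀ χ ∈ c, χ ∈ S ∧ ∀ z, M.sq v z → ¬ M.Sat χ z

@[ext]
structure FiltrationWorld : Type where
  theory : Set Fml
  avoid : Option Fml
  realized : ∃ v, M.Realizes S v theory avoid

/-- The disjunct `.bot ∈ x.theory` in `val` keeps fallible worlds in every `val p`, also for
variables outside `S`. -/
def filtration : KModel.{0} where
  W := M.FiltrationWorld S
  fallible := {x | .bot ∈ x.theory}
  le x y := x.theory ⊆ y.theory
  sq x y := (∀ χ, .box χ ∈ x.theory → .box χ ∈ y.theory) ∧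
    (.bot ∈ x.theory → .bot ∈ y.theory) ∧ ∀ χ ∈ x.avoid, χ ∈ y.avoid
  val p := {x | .var p ∈ x.theory ∨ .bot ∈ x.theory}

variable {M S}

theorem typeOf_mono (hM : M.IsBiInt) {v w : M.W} (h : M.le v w) :
    M.typeOf S v ⊆ M.typeOf S w :=
  fun ψ hψ => ⟨hψ.1, sat_mono hM ψ h hψ.2⟩

def toFiltration (v : M.W) : M.FiltrationWorld S :=
  ⟨M.typeOf S v, none, v, rfl, fun _ h => nomatch h⟩

theorem filtration_isCS4 : (M.filtration S).IsCS4 := by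
  refine ⟨⟨fun _ => subset_rfl, fun _ _ _ h₁ h₂ => h₁.trans h₂,
    fun _ => ⟨fun _ => id, id, fun _ => id⟩,
    fun _ _ _ h₁ h₂ => ⟨fun χ h => h₂.1 χ (h₁.1 χ h), fun h => h₂.2.1 (h₁.2.1 h),
      fun χ h => h₂.2.2 χ (h₁.2.2 χ h)⟩,
    fun _ _ h hle => hle h, fun _ _ h hsq => hsq.2.1 h,
    fun _ _ _ h hle => h.imp (@hle _) (@hle _), fun _ _ => Or.inr⟩, ?_⟩
  -- back–up confluence: `x` with its `avoid` component dropped is the required world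
  rintro x y z ⟨hbox, hbot, -⟩ hyz
  obtain ⟨v, hv⟩ := x.realized
  exact ⟨⟨x.theory, none, v, hv.1, fun _ h => nomatch h⟩, subset_rfl,
    fun χ h => hyz (hbox χ h), fun h => hyz (hbot h), fun _ h => nomatch h⟩

theorem finite_filtration (hS : S.Finite) : Finite (M.filtration S).W := by
  let T : Set (Set Fml × Option Fml) := {Γ | Γ ⊆ S} ×ˢ insert none (some '' S)
  have : Finite T := (hS.finite_subsets.prod ((hS.image some).insert none)).to_subtype
  have hmem (x : M.FiltrationWorld S) : (x.theory, x.avoid) ∈ T := by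
    obtain ⟨v, hΓ, hav⟩ := x.realized
    refine ⟨hΓ ▸ fun ψ hψ => hψ.1, ?_⟩
    cases h : x.avoid with
    | none => exact Or.inl rfl
    | some χ => exact Or.inr ⟨χ, (hav χ h).1, rfl⟩
  refine Finite.of_injective (β := T) (fun x => ⟨_, hmem x⟩) fun x y hxy => ?_
  simp only [Subtype.mk.injEq, Prod.mk.injEq] at hxy
  exact FiltrationWorld.ext hxy.1 hxy.2

theorem mem_typeOf_iff {ψ : Fml} (hψ : ψ ∈ S) {v : M.W} : ψ ∈ M.typeOf S v ↔ M.Sat ψ v :=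
  and_iff_right hψ

theorem FiltrationWorld.exists_sq (hM : M.IsCS4) (x : M.FiltrationWorld S) {t s : M.W}
    (ht : M.Realizes S t x.theory x.avoid) (hts : M.sq t s) :
    ∃ z : M.FiltrationWorld S, (M.filtration S).sq x z ∧ z.theory = M.typeOf S s := by
  refine ⟨⟨M.typeOf S s, x.avoid, s, rfl, fun χ hχ => ⟨(ht.2 χ hχ).1,
    fun z hsz => (ht.2 χ hχ).2 z (hM.1.sq_trans hts hsz)⟩⟩, ⟨?_, ?_, fun _ => id⟩, rfl⟩
  · intro χ hχ
    rw [ht.1] at hχ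
    exact ⟨hχ.1, sat_box_of_sq hM hχ.2 hts⟩
  · intro hb
    rw [ht.1] at hb
    exact ⟨hb.1, hM.1.mem_fallible_of_sq hb.2 hts⟩

theorem filtration_le_of_le (hM : M.IsBiInt) {x y : M.FiltrationWorld S} {v u : M.W}
    (hv : x.theory = M.typeOf S v) (hu : y.theory = M.typeOf S u) (hvu : M.le v u) :
    (M.filtration S).le x y := by
  change x.theory ⊆ y.theory
  exact hv ▸ hu ▸ typeOf_mono hM hvu

theorem filtration_sat_imp_iff (hM : M.IsCS4) {α β : Fml} (hS : .imp α β ∈ S) (hα : α ∈ S)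
    (hβ : β ∈ S)
    (ihα : ∀ x, (M.filtration S).Sat α x ↔ α ∈ x.theory)
    (ihβ : ∀ x, (M.filtration S).Sat β x ↔ β ∈ x.theory) (x : M.FiltrationWorld S) :
    (M.filtration S).Sat (.imp α β) x ↔ .imp α β ∈ x.theory := by
  obtain ⟨v, hv, -⟩ := x.realized
  simp only [Sat, ihα, ihβ]
  constructor
  · intro h
    rw [hv, mem_typeOf_iff hS]
    exact fun u hvu hu => (h (toFiltration u) (filtration_le_of_le hM.1 hv rfl hvu) ⟨hα, hu⟩).2
  · intro h y hxy hαy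
    obtain ⟨t, ht, -⟩ := y.realized
    have himp := hxy h
    rw [ht] at hαy himp ⊢
    exact ⟨hβ, himp.2 t (hM.1.le_refl t) hαy.2⟩

theorem filtration_sat_dia_iff (hM : M.IsCS4) {ψ : Fml} (hS : .dia ψ ∈ S) (hψ : ψ ∈ S)
    (ih : ∀ x, (M.filtration S).Sat ψ x ↔ ψ ∈ x.theory) (x : M.FiltrationWorld S) :
    (M.filtration S).Sat (.dia ψ) x ↔ .dia ψ ∈ x.theory := by
  obtain ⟨v, hv, -⟩ := x.realized
  simp only [Sat, ih]
  constructor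
  · intro h
    rw [hv, mem_typeOf_iff hS]
    by_contra hv'
    simp only [Sat, not_forall, not_exists, not_and] at hv'
    obtain ⟨u, hvu, hu⟩ := hv'
    let y : M.FiltrationWorld S :=
      ⟨M.typeOf S u, some ψ, u, rfl, by rintro _ ⟨⟩; exact ⟨hψ, hu⟩⟩
    obtain ⟨z, ⟨-, -, hzav⟩, hz⟩ := h y (filtration_le_of_le hM.1 hv rfl hvu)
    obtain ⟨t, ht, htav⟩ := z.realized
    exact (htav ψ (hzav ψ rfl)).2 t (hM.1.sq_refl t) (ht ▸ hz).2
  · intro h y hxy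
    obtain ⟨t, ht⟩ := y.realized
    have htψ : M.Sat (.dia ψ) t := (ht.1 ▸ hxy h).2
    obtain ⟨s, hts, hs⟩ := htψ t (hM.1.le_refl t)
    obtain ⟨z, hyz, hz⟩ := y.exists_sq hM ht hts
    exact ⟨z, hyz, hz ▸ ⟨hψ, hs⟩⟩

theorem filtration_sat_box_iff (hM : M.IsCS4) {ψ : Fml} (hS : .box ψ ∈ S) (hψ : ψ ∈ S)
    (ih : ∀ x, (M.filtration S).Sat ψ x ↔ ψ ∈ x.theory) (x : M.FiltrationWorld S) :
    (M.filtration S).Sat (.box ψ) x ↔ .box ψ ∈ x.theory := by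
  obtain ⟨v, hv, -⟩ := x.realized
  simp only [Sat, ih]
  constructor
  · intro h
    rw [hv, mem_typeOf_iff hS]
    intro u z hvu huz
    obtain ⟨z', huz', hz'⟩ :=
      (toFiltration (S := S) u).exists_sq hM ⟨rfl, fun _ h => nomatch h⟩ huz
    exact (hz' ▸ h _ z' (filtration_le_of_le hM.1 hv rfl hvu) huz').2
  · intro h u z hxu huz
    obtain ⟨t, ht, -⟩ := z.realized
    have hbox : M.Sat (.box ψ) t := (ht ▸ huz.1 ψ (hxu h)).2
    exact ht ▸ ⟨hψ, hbox t t (hM.1.le_refl t) (hM.1.sq_refl t)⟩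

theorem filtration_sat_iff (hM : M.IsCS4) :
    ∀ {ψ : Fml}, ↑ψ.subformulas ⊆ S → ∀ x : M.FiltrationWorld S,
      (M.filtration S).Sat ψ x ↔ ψ ∈ x.theory
  | .var p, hS, x => by
    obtain ⟨v, hv, -⟩ := x.realized
    refine ⟨fun h => h.elim id fun hb => ?_, Or.inl⟩
    rw [hv] at hb ⊢
    exact ⟨Fml.mem_of_subformulas_subset hS, hM.1.mem_val_of_mem_fallible p hb.2⟩
  | .bot, _, _ => Iff.rfl
  | .and α β, hS, x | .or α β, hS, x => by
    simp only [Fml.subformulas, Finset.coe_insert, Finset.coe_union, Set.insert_subset_iff,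
      Set.union_subset_iff] at hS
    obtain ⟨hS, hα, hβ⟩ := hS
    obtain ⟨v, hv, -⟩ := x.realized
    simp only [Sat, filtration_sat_iff hM hα, filtration_sat_iff hM hβ, hv, mem_typeOf_iff hS,
      mem_typeOf_iff (Fml.mem_of_subformulas_subset hα),
      mem_typeOf_iff (Fml.mem_of_subformulas_subset hβ)]
  | .imp α β, hS, x => by
    simp only [Fml.subformulas, Finset.coe_insert, Finset.coe_union, Set.insert_subset_iff,
      Set.union_subset_iff] at hS
    obtain ⟨hS, hα, hβ⟩ := hS
    exact filtration_sat_imp_iff hM hS (Fml.mem_of_subformulas_subset hα)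
      (Fml.mem_of_subformulas_subset hβ) (filtration_sat_iff hM hα) (filtration_sat_iff hM hβ) x
  | .dia ψ, hS, x => by
    simp only [Fml.subformulas, Finset.coe_insert, Set.insert_subset_iff] at hS
    exact filtration_sat_dia_iff hM hS.1 (Fml.mem_of_subformulas_subset hS.2)
      (filtration_sat_iff hM hS.2) x
  | .box ψ, hS, x => by
    simp only [Fml.subformulas, Finset.coe_insert, Set.insert_subset_iff] at hS
    exact filtration_sat_box_iff hM hS.1 (Fml.mem_of_subformulas_subset hS.2)
      (filtration_sat_iff hM hS.2) x

theorem exists_finite_isCS4_sat_iff {φ : Fml} (hM : M.IsCS4) {w : M.W} (hw : w ∉ M.fallible) :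
    ∃ (N : KModel.{0}) (v : N.W), N.IsCS4 ∧ Finite N.W ∧ v ∉ N.fallible ∧
      (N.Sat φ v ↔ M.Sat φ w) :=
  ⟨M.filtration φ.subformulas, toFiltration w, filtration_isCS4,
    finite_filtration φ.subformulas.finite_toSet, fun hb => hw hb.2,
    (filtration_sat_iff hM subset_rfl _).trans
      (mem_typeOf_iff (Fml.mem_of_subformulas_subset subset_rfl))⟩

end KModel

/-- **The finite frame property for CS4.** If an `L`-formula `φ` is falsifiable
(respectively, satisfiable) on some CS4 frame, then `φ` is falsifiable
(respectively, satisfiable) on some CS4 frame whose set of worlds is finite. -/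
theorem cs4_finite_frame_property (φ : Fml) :
    ((∃ (M : KModel.{u}) (w : M.W), M.IsCS4 ∧ w ∉ M.fallible ∧ ¬ M.Sat φ w) →
      ∃ (N : KModel.{0}) (v : N.W), N.IsCS4 ∧ Finite N.W ∧ v ∉ N.fallible ∧ ¬ N.Sat φ v) ∧
    ((∃ (M : KModel.{u}) (w : M.W), M.IsCS4 ∧ w ∉ M.fallible ∧ M.Sat φ w) →
      ∃ (N : KModel.{0}) (v : N.W), N.IsCS4 ∧ Finite N.W ∧ v ∉ N.fallible ∧ N.Sat φ v) := by
  refine ⟨?_, ?_⟩ <;>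
  · rintro ⟨M, w, hM, hw, hφ⟩
    obtain ⟨N, v, hN, hfin, hv, hiff⟩ := KModel.exists_finite_isCS4_sat_iff (φ := φ) hM hw
    exact ⟨N, v, hN, hfin, hv, by rwa [hiff]⟩
end

section
/- For each Λ among IS4, S4I, GS4, and GS4c, and for every set Γ of L-formulas and every L-formula φ: Γ ⊨_Λ φ if and only if Γ ⊢_Λ φ, where ⊨_Λ denotes local semantic consequence on the class of Λ frames. In particular each of these logics is sound and strongly complete with respect to its class of frames. -/
universe u

/-- Hilbert-style derivability from intuitionistic propositional axiom schemes,
the S4 modal axiom schemes, an extra set `Ax` of axioms, modus ponens and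
necessitation.  Since all axioms are given as schemes, the resulting set of
formulas is closed under substitution. -/
inductive Deriv (Ax : Fml → Prop) : Fml → Prop where
  | ax {φ} : Ax φ → Deriv Ax φ
  | then₁ (φ ψ : Fml) : Deriv Ax (φ.imp (ψ.imp φ))
  | then₂ (φ ψ χ : Fml) :
      Deriv Ax ((φ.imp (ψ.imp χ)).imp ((φ.imp ψ).imp (φ.imp χ)))
  | andE₁ (φ ψ : Fml) : Deriv Ax ((φ.and ψ).imp φ)
  | andE₂ (φ ψ : Fml) : Deriv Ax ((φ.and ψ).imp ψ)
  | andI (φ ψ : Fml) : Deriv Ax (φ.imp (ψ.imp (φ.and ψ)))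
  | orI₁ (φ ψ : Fml) : Deriv Ax (φ.imp (φ.or ψ))
  | orI₂ (φ ψ : Fml) : Deriv Ax (ψ.imp (φ.or ψ))
  | orE (φ ψ χ : Fml) :
      Deriv Ax ((φ.imp χ).imp ((ψ.imp χ).imp ((φ.or ψ).imp χ)))
  | exfalso (φ : Fml) : Deriv Ax (Fml.bot.imp φ)
  | kBox (φ ψ : Fml) : Deriv Ax (((φ.imp ψ).box).imp ((φ.box).imp (ψ.box)))
  | kDia (φ ψ : Fml) : Deriv Ax (((φ.imp ψ).box).imp ((φ.dia).imp (ψ.dia)))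
  | tBox (φ : Fml) : Deriv Ax ((φ.box).imp φ)
  | tDia (φ : Fml) : Deriv Ax (φ.imp (φ.dia))
  | fourBox (φ : Fml) : Deriv Ax ((φ.box).imp ((φ.box).box))
  | fourDia (φ : Fml) : Deriv Ax (((φ.dia).dia).imp (φ.dia))
  | mp {φ ψ} : Deriv Ax (φ.imp ψ) → Deriv Ax φ → Deriv Ax ψ
  | nec {φ} : Deriv Ax φ → Deriv Ax (φ.box)

/-- The axiom scheme DP: `◇(p∨q) → ◇p ∨ ◇q`. -/
def AxDP (χ : Fml) : Prop :=
  ∃ φ ψ : Fml, χ = ((φ.or ψ).dia).imp ((φ.dia).or (ψ.dia))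

/-- The axiom N: `¬◇⊥`, where `¬φ` abbreviates `φ → ⊥`. -/
def AxN (χ : Fml) : Prop := χ = (Fml.bot.dia).imp Fml.bot

/-- The axiom scheme FS2: `(◇p → □q) → □(p → q)`. -/
def AxFS2 (χ : Fml) : Prop :=
  ∃ φ ψ : Fml, χ = ((φ.dia).imp (ψ.box)).imp ((φ.imp ψ).box)

/-- The axiom scheme CD: `□(p∨q) → □p ∨ ◇q`. -/
def AxCD (χ : Fml) : Prop :=
  ∃ φ ψ : Fml, χ = ((φ.or ψ).box).imp ((φ.box).or (ψ.dia))

/-- The axiom scheme GD: `(p→q) ∨ (q→p)`. -/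
def AxGD (χ : Fml) : Prop :=
  ∃ φ ψ : Fml, χ = (φ.imp ψ).or (ψ.imp φ)

/-- The logic CS4. -/
def CS4 : Fml → Prop := Deriv (fun _ => False)

/-- The logic IS4 = CS4 + DP + N + FS2. -/
def IS4 : Fml → Prop := Deriv (fun χ => AxDP χ ∨ AxN χ ∨ AxFS2 χ)

/-- The logic S4I = CS4 + DP + N + CD. -/
def S4I : Fml → Prop := Deriv (fun χ => AxDP χ ∨ AxN χ ∨ AxCD χ)

/-- The logic GS4 = IS4 + GD. -/
def GS4 : Fml → Prop := Deriv (fun χ => AxDP χ ∨ AxN χ ∨ AxFS2 χ ∨ AxGD χ)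

/-- The logic GS4c = GS4 + CD. -/
def GS4c : Fml → Prop :=
  Deriv (fun χ => AxDP χ ∨ AxN χ ∨ AxFS2 χ ∨ AxGD χ ∨ AxCD χ)

/-- Conjunction of a finite list of formulas (the empty conjunction is `⊥ → ⊥`). -/
def conjList (l : List Fml) : Fml := l.foldr Fml.and (Fml.bot.imp Fml.bot)

/-- Syntactic consequence: `Γ ⊢_Λ φ` iff `⋀Γ' → φ ∈ Λ` for some finite `Γ' ⊆ Γ`. -/
def SynConseq (L : Fml → Prop) (Γ : Set Fml) (φ : Fml) : Prop :=
  ∃ l : List Fml, (∀ ψ ∈ l, ψ ∈ Γ) ∧ L ((conjList l).imp φ)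

/-- Local semantic consequence on the class of models satisfying `C`: at every
infallible world of every model of the class, if all formulas of `Γ` are
satisfied then so is `φ`. -/
def SemConseq (C : KModel.{u} → Prop) (Γ : Set Fml) (φ : Fml) : Prop :=
  ∀ M : KModel.{u}, C M → ∀ w : M.W, w ∉ M.fallible →
    (∀ ψ ∈ Γ, M.Sat ψ w) → M.Sat φ w

/-!
Soundness is an induction on derivations; the only scheme of the base logic whose validity
depends on the frame class is 4□, which needs back–up or forth–down confluence.

Completeness goes through a canonical model whose worlds are prime theories, ordered by
inclusion, with `T ⊑ U` iff `□φ ∈ T → φ ∈ U` and `φ ∈ U → ◇φ ∈ T`. Every world the truth lemma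
and the frame conditions call for comes from one prime filter theorem: if no finite conjunction
of a set `S` lies in an ideal (a set of formulas closed under provable strengthening and `∨` and
containing `⊥`), then `S` extends to a prime theory with the same property. DP and N make
`{c | ◇c ∉ Θ}` an ideal, which yields `◇`-witnesses and forth–up confluence; FS2 yields back–up
confluence and `□`-refuting successors; CD yields forth–down confluence and, again,
`□`-refuting successors; GD makes the prime extensions of a prime theory a chain.
-/

namespace Deriv

variable {Ax : Fml → Prop} {φ ψ χ : Fml}

theorem weaken (h : Deriv Ax ψ) (φ : Fml) : Deriv Ax (φ.imp ψ) :=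
  (then₁ ψ φ).mp h

theorem imp_self (φ : Fml) : Deriv Ax (φ.imp φ) :=
  ((then₂ φ (φ.imp φ) φ).mp (then₁ φ (φ.imp φ))).mp (then₁ φ φ)

theorem imp_mp (h₁ : Deriv Ax (φ.imp (ψ.imp χ))) (h₂ : Deriv Ax (φ.imp ψ)) :
    Deriv Ax (φ.imp χ) :=
  ((then₂ φ ψ χ).mp h₁).mp h₂

theorem imp_trans (h₁ : Deriv Ax (φ.imp ψ)) (h₂ : Deriv Ax (ψ.imp χ)) : Deriv Ax (φ.imp χ) :=
  imp_mp (weaken h₂ φ) h₁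

theorem imp_and (h₁ : Deriv Ax (χ.imp φ)) (h₂ : Deriv Ax (χ.imp ψ)) :
    Deriv Ax (χ.imp (φ.and ψ)) :=
  imp_mp (imp_mp (weaken (andI φ ψ) χ) h₁) h₂

theorem curry (h : Deriv Ax ((φ.and ψ).imp χ)) : Deriv Ax (φ.imp (ψ.imp χ)) :=
  (andI φ ψ).imp_trans ((then₂ ψ (φ.and ψ) χ).mp (weaken h ψ))

theorem uncurry (h : Deriv Ax (φ.imp (ψ.imp χ))) : Deriv Ax ((φ.and ψ).imp χ) :=
  imp_mp ((andE₁ φ ψ).imp_trans h) (andE₂ φ ψ)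

theorem imp_antitone (h : Deriv Ax (φ.imp ψ)) : Deriv Ax ((ψ.imp χ).imp (φ.imp χ)) :=
  curry (imp_mp (andE₁ _ _) ((andE₂ _ _).imp_trans h))

theorem or_elim (h₁ : Deriv Ax (φ.imp χ)) (h₂ : Deriv Ax (ψ.imp χ)) :
    Deriv Ax ((φ.or ψ).imp χ) :=
  ((orE φ ψ χ).mp h₁).mp h₂

theorem or_mono {φ' ψ' : Fml} (h₁ : Deriv Ax (φ.imp φ')) (h₂ : Deriv Ax (ψ.imp ψ')) :
    Deriv Ax ((φ.or ψ).imp (φ'.or ψ')) :=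
  or_elim (h₁.imp_trans (orI₁ φ' ψ')) (h₂.imp_trans (orI₂ φ' ψ'))

theorem or_and_imp {χ₁ χ₂ : Fml} (h₁ : Deriv Ax (χ.imp χ₁)) (h₂ : Deriv Ax (χ.imp χ₂)) :
    Deriv Ax (((φ.or ψ).and χ).imp ((χ₁.and φ).or (χ₂.and ψ))) :=
  uncurry (or_elim
    (curry ((imp_and ((andE₂ _ _).imp_trans h₁) (andE₁ _ _)).imp_trans (orI₁ _ _)))
    (curry ((imp_and ((andE₂ _ _).imp_trans h₂) (andE₁ _ _)).imp_trans (orI₂ _ _))))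

theorem or_swap (φ ψ : Fml) : Deriv Ax ((φ.or ψ).imp (ψ.or φ)) :=
  or_elim (orI₂ ψ φ) (orI₁ ψ φ)

theorem top : Deriv Ax (conjList []) :=
  exfalso Fml.bot

theorem conjList_imp_of_mem {l : List Fml} (h : φ ∈ l) : Deriv Ax ((conjList l).imp φ) := by
  induction l with
  | nil => cases h
  | cons a l ih =>
    rcases List.mem_cons.mp h with rfl | h
    · exact andE₁ _ _
    · exact (andE₂ _ _).imp_trans (ih h)

theorem imp_conjList {l : List Fml} (h : ∀ ψ ∈ l, Deriv Ax (χ.imp ψ)) :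
    Deriv Ax (χ.imp (conjList l)) := by
  induction l with
  | nil => exact weaken top χ
  | cons a l ih =>
    exact imp_and (h a List.mem_cons_self) (ih fun ψ hψ => h ψ (List.mem_cons_of_mem a hψ))

theorem conjList_imp_conjList {l l' : List Fml} (h : ∀ ψ ∈ l, ψ ∈ l') :
    Deriv Ax ((conjList l').imp (conjList l)) :=
  imp_conjList fun _ hψ => conjList_imp_of_mem (h _ hψ)

theorem exists_conjList_split {A B : Set Fml} {l : List Fml} (hl : ∀ x ∈ l, x ∈ A ∪ B) :
    ∃ la lb : List Fml, (∀ x ∈ la, x ∈ A) ∧ (∀ x ∈ lb, x ∈ B) ∧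
      Deriv Ax (((conjList la).and (conjList lb)).imp (conjList l)) := by
  classical
  refine ⟨l.filter (· ∈ A), l.filter (· ∉ A), fun x hx => ?_, fun x hx => ?_,
    imp_conjList fun x hx => ?_⟩
  · simpa using (List.mem_filter.mp hx).2
  · obtain ⟨hxl, hxA⟩ := List.mem_filter.mp hx
    exact (hl x hxl).resolve_left (by simpa using hxA)
  · by_cases hxA : x ∈ A
    · exact (andE₁ _ _).imp_trans (conjList_imp_of_mem (List.mem_filter.mpr ⟨hx, by simpa⟩))
    · exact (andE₂ _ _).imp_trans (conjList_imp_of_mem (List.mem_filter.mpr ⟨hx, by simpa⟩))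

theorem exists_conjList_insert {α : Fml} {T : Set Fml} {l : List Fml}
    (hl : ∀ x ∈ l, x ∈ insert α T) :
    ∃ l' : List Fml, (∀ x ∈ l', x ∈ T) ∧ Deriv Ax (((conjList l').and α).imp (conjList l)) := by
  obtain ⟨la, lb, hla, hlb, hd⟩ := exists_conjList_split (A := T) (B := {α}) fun x hx => by
    rcases hl x hx with rfl | h
    exacts [Or.inr rfl, Or.inl h]
  have hα : Deriv Ax (α.imp (conjList lb)) := imp_conjList fun x hx => by
    rw [Set.mem_singleton_iff.mp (hlb x hx)]; exact imp_self α
  exact ⟨la, hla, (imp_and (andE₁ _ _) ((andE₂ _ _).imp_trans hα)).imp_trans hd⟩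

theorem box_mono (h : Deriv Ax (φ.imp ψ)) : Deriv Ax (φ.box.imp ψ.box) :=
  (kBox φ ψ).mp h.nec

theorem dia_mono (h : Deriv Ax (φ.imp ψ)) : Deriv Ax (φ.dia.imp ψ.dia) :=
  (kDia φ ψ).mp h.nec

theorem box_and_box (φ ψ : Fml) : Deriv Ax ((φ.box.and ψ.box).imp ((φ.and ψ).box)) :=
  uncurry ((box_mono (andI φ ψ)).imp_trans (kBox ψ (φ.and ψ)))

theorem box_imp_dia_imp_dia_and (φ ψ : Fml) :
    Deriv Ax (φ.box.imp (ψ.dia.imp ((φ.and ψ).dia))) :=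
  (box_mono (andI φ ψ)).imp_trans (kDia ψ (φ.and ψ))

theorem axDP (h : AxDP ≤ Ax) (φ ψ : Fml) :
    Deriv Ax (((φ.or ψ).dia).imp ((φ.dia).or (ψ.dia))) :=
  ax (h _ ⟨φ, ψ, rfl⟩)

theorem axN (h : AxN ≤ Ax) : Deriv Ax ((Fml.bot.dia).imp Fml.bot) :=
  ax (h _ rfl)

theorem axFS2 (h : AxFS2 ≤ Ax) (φ ψ : Fml) :
    Deriv Ax (((φ.dia).imp (ψ.box)).imp ((φ.imp ψ).box)) :=
  ax (h _ ⟨φ, ψ, rfl⟩)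

theorem axCD (h : AxCD ≤ Ax) (φ ψ : Fml) :
    Deriv Ax (((φ.or ψ).box).imp ((φ.box).or (ψ.dia))) :=
  ax (h _ ⟨φ, ψ, rfl⟩)

theorem axGD (h : AxGD ≤ Ax) (φ ψ : Fml) : Deriv Ax ((φ.imp ψ).or (ψ.imp φ)) :=
  ax (h _ ⟨φ, ψ, rfl⟩)

end Deriv

namespace KModel

variable {M : KModel.{u}}

namespace IsBiInt

variable {u v w : M.W}

theorem le_refl_s5 (hM : M.IsBiInt) (w : M.W) : M.le w w := hM.1 w

theorem le_trans (hM : M.IsBiInt) : M.le u v → M.le v w → M.le u w := hM.2.1 u v w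

theorem sq_refl_s5 (hM : M.IsBiInt) (w : M.W) : M.sq w w := hM.2.2.1 w

theorem sq_trans_s5 (hM : M.IsBiInt) : M.sq u v → M.sq v w → M.sq u w := hM.2.2.2.1 u v w

theorem fallible_of_le (hM : M.IsBiInt) : w ∈ M.fallible → M.le w v → v ∈ M.fallible :=
  hM.2.2.2.2.1 w v

theorem fallible_of_sq (hM : M.IsBiInt) : w ∈ M.fallible → M.sq w v → v ∈ M.fallible :=
  hM.2.2.2.2.2.1 w v

theorem val_of_le (hM : M.IsBiInt) {p : ℕ} : w ∈ M.val p → M.le w v → v ∈ M.val p :=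
  hM.2.2.2.2.2.2.1 p w v

theorem val_of_fallible (hM : M.IsBiInt) {p : ℕ} : w ∈ M.fallible → w ∈ M.val p :=
  hM.2.2.2.2.2.2.2 p w

end IsBiInt

theorem Sat.of_le (hM : M.IsBiInt) {φ : Fml} {w v : M.W} (h : M.Sat φ w) (hwv : M.le w v) :
    M.Sat φ v := by
  induction φ generalizing w v with
  | var p => exact hM.val_of_le h hwv
  | bot => exact hM.fallible_of_le h hwv
  | and φ ψ ihφ ihψ => exact ⟨ihφ h.1 hwv, ihψ h.2 hwv⟩
  | or φ ψ ihφ ihψ => exact h.imp (ihφ · hwv) (ihψ · hwv)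
  | imp φ ψ => exact fun x hx => h x (hM.le_trans hwv hx)
  | dia φ => exact fun x hx => h x (hM.le_trans hwv hx)
  | box φ => exact fun x y hx => h x y (hM.le_trans hwv hx)

theorem sat_of_fallible (hM : M.IsBiInt) (φ : Fml) {w : M.W} (h : w ∈ M.fallible) :
    M.Sat φ w := by
  induction φ generalizing w with
  | var p => exact hM.val_of_fallible h
  | bot => exact h
  | and φ ψ ihφ ihψ => exact ⟨ihφ h, ihψ h⟩
  | or φ ψ ihφ => exact .inl (ihφ h)
  | imp φ ψ _ ihψ => exact fun v hv _ => ihψ (hM.fallible_of_le h hv)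
  | dia φ ih => exact fun v hv => ⟨v, hM.sq_refl_s5 v, ih (hM.fallible_of_le h hv)⟩
  | box φ ih => exact fun v x hv hx => ih (hM.fallible_of_sq (hM.fallible_of_le h hv) hx)

theorem sat_conjList {w : M.W} {l : List Fml} (h : ∀ ψ ∈ l, M.Sat ψ w) :
    M.Sat (conjList l) w := by
  induction l with
  | nil => exact fun _ _ h => h
  | cons a l ih => exact ⟨h a List.mem_cons_self, ih fun ψ hψ => h ψ (List.mem_cons_of_mem a hψ)⟩

theorem sat_dia_of_sq (hM : M.IsBiInt) (hfu : M.ForthUp) {φ : Fml} {w v : M.W}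
    (hwv : M.sq w v) (hv : M.Sat φ v) : M.Sat φ.dia w := fun u hwu =>
  let ⟨v', hvv', hsq⟩ := hfu w u v hwu hwv
  ⟨v', hsq, hv.of_le hM hvv'⟩

theorem sat_fourBox (hM : M.IsBiInt) (h4 : M.BackUp ∨ M.ForthDown) (φ : Fml) (w : M.W) :
    M.Sat (φ.box.imp φ.box.box) w := by
  intro v _ h u y hvu huy x z hyx hxz
  rcases h4 with hbu | hfd
  · obtain ⟨t, hut, htx⟩ := hbu u y x huy hyx
    exact h t z (hM.le_trans hvu hut) (hM.sq_trans_s5 htx hxz)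
  · obtain ⟨t, hyt, htz⟩ := hfd y x z hyx hxz
    exact (h u t hvu (hM.sq_trans_s5 huy hyt)).of_le hM htz

theorem sat_of_deriv {Ax : Fml → Prop} (hM : M.IsBiInt) (h4 : M.BackUp ∨ M.ForthDown)
    (hAx : ∀ χ, Ax χ → ∀ w, M.Sat χ w) {φ : Fml} (hd : Deriv Ax φ) (w : M.W) : M.Sat φ w := by
  induction hd generalizing w with
  | ax h => exact hAx _ h w
  | then₁ φ ψ => exact fun v _ hφ u hu _ => hφ.of_le hM hu
  | then₂ φ ψ χ =>
    exact fun v _ h₁ u hvu h₂ x hux hφ =>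
      h₁ x (hM.le_trans hvu hux) hφ x (hM.le_refl_s5 x) (h₂ x hux hφ)
  | andE₁ φ ψ => exact fun _ _ h => h.1
  | andE₂ φ ψ => exact fun _ _ h => h.2
  | andI φ ψ => exact fun v _ hφ u hu hψ => ⟨hφ.of_le hM hu, hψ⟩
  | orI₁ φ ψ => exact fun _ _ h => .inl h
  | orI₂ φ ψ => exact fun _ _ h => .inr h
  | orE φ ψ χ =>
    exact fun v _ h₁ u hvu h₂ x hux hor =>
      hor.elim (h₁ x (hM.le_trans hvu hux)) (h₂ x hux)
  | exfalso φ => exact fun _ _ h => sat_of_fallible hM φ h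
  | kBox φ ψ =>
    exact fun v _ h₁ u hvu h₂ x y hux hxy =>
      h₁ x y (hM.le_trans hvu hux) hxy y (hM.le_refl_s5 y) (h₂ x y hux hxy)
  | kDia φ ψ =>
    intro v _ h₁ u hvu h₂ x hux
    obtain ⟨y, hxy, hy⟩ := h₂ x hux
    exact ⟨y, hxy, h₁ x y (hM.le_trans hvu hux) hxy y (hM.le_refl_s5 y) hy⟩
  | tBox φ => exact fun v _ h => h v v (hM.le_refl_s5 v) (hM.sq_refl_s5 v)
  | tDia φ => exact fun v _ hφ u hu => ⟨u, hM.sq_refl_s5 u, hφ.of_le hM hu⟩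
  | fourBox φ => exact sat_fourBox hM h4 φ w
  | fourDia φ =>
    intro v _ h u hu
    obtain ⟨y, huy, hy⟩ := h u hu
    obtain ⟨z, hyz, hz⟩ := hy y (hM.le_refl_s5 y)
    exact ⟨z, hM.sq_trans_s5 huy hyz, hz⟩
  | mp _ _ ih₁ ih₂ => exact ih₁ w w (hM.le_refl_s5 w) (ih₂ w)
  | nec _ ih => exact fun _ v _ _ => ih v

theorem sat_of_axDP (hM : M.IsBiInt) (hfu : M.ForthUp) {χ : Fml} (h : AxDP χ) (w : M.W) :
    M.Sat χ w := by
  obtain ⟨φ, ψ, rfl⟩ := h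
  intro v _ h
  obtain ⟨y, hvy, hy⟩ := h v (hM.le_refl_s5 v)
  exact hy.imp (sat_dia_of_sq hM hfu hvy) (sat_dia_of_sq hM hfu hvy)

theorem sat_of_axN (hM : M.IsBiInt) (hinf : M.Infallible) {χ : Fml} (h : AxN χ) (w : M.W) :
    M.Sat χ w := by
  subst h
  intro v _ h
  obtain ⟨y, -, hy⟩ := h v (hM.le_refl_s5 v)
  exact absurd (hinf ▸ hy : y ∈ (∅ : Set M.W)) (Set.notMem_empty y)

theorem sat_of_axFS2 (hM : M.IsBiInt) (hfu : M.ForthUp) (hbu : M.BackUp) {χ : Fml}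
    (h : AxFS2 χ) (w : M.W) : M.Sat χ w := by
  obtain ⟨φ, ψ, rfl⟩ := h
  intro v _ h u y hvu huy z hyz hz
  obtain ⟨t, hut, htz⟩ := hbu u y z huy hyz
  exact h t (hM.le_trans hvu hut) (sat_dia_of_sq hM hfu htz hz) t z (hM.le_refl_s5 t) htz

theorem sat_of_axCD (hM : M.IsBiInt) (hfu : M.ForthUp) (hfd : M.ForthDown) {χ : Fml}
    (h : AxCD χ) (w : M.W) : M.Sat χ w := by
  obtain ⟨φ, ψ, rfl⟩ := h
  intro v _ h
  by_cases hψ : M.Sat ψ.dia v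
  · exact .inr hψ
  left
  obtain ⟨u₀, hvu₀, hu₀⟩ : ∃ u₀, M.le v u₀ ∧ ∀ y, M.sq u₀ y → ¬ M.Sat ψ y := by
    simpa [KModel.Sat] using hψ
  intro u y hvu huy
  obtain ⟨t, hvt, hty⟩ := hfd v u y hvu huy
  refine (h v t (hM.le_refl_s5 v) hvt).elim (·.of_le hM hty) fun htψ => ?_
  -- forth–up confluence carries the `ψ`-world `t` to a `⊑`-successor of `u₀`
  obtain ⟨t', htt', hu₀t'⟩ := hfu v u₀ t hvu₀ hvt
  exact absurd (htψ.of_le hM htt') (hu₀ t' hu₀t')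

theorem sat_of_axGD (hM : M.IsBiInt) (hlin : M.UpLinear) {χ : Fml} (h : AxGD χ) (w : M.W) :
    M.Sat χ w := by
  obtain ⟨φ, ψ, rfl⟩ := h
  by_cases hφψ : M.Sat (φ.imp ψ) w
  · exact .inl hφψ
  right
  obtain ⟨v, hwv, hφv, hψv⟩ : ∃ v, M.le w v ∧ M.Sat φ v ∧ ¬ M.Sat ψ v := by
    simpa [KModel.Sat] using hφψ
  intro u hwu hψu
  rcases hlin w u v hwu hwv with huv | hvu
  · exact absurd (hψu.of_le hM huv) hψv
  · exact hφv.of_le hM hvu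

theorem IsIS4.sat_of_IS4 (hM : M.IsIS4) {φ : Fml} (hd : IS4 φ) (w : M.W) : M.Sat φ w := by
  obtain ⟨⟨hBi, hbu⟩, hfu, hinf⟩ := hM
  refine sat_of_deriv hBi (.inl hbu) (fun χ h => ?_) hd w
  rcases h with h | h | h
  exacts [sat_of_axDP hBi hfu h, sat_of_axN hBi hinf h, sat_of_axFS2 hBi hfu hbu h]

theorem IsS4I.sat_of_S4I (hM : M.IsS4I) {φ : Fml} (hd : S4I φ) (w : M.W) : M.Sat φ w := by
  obtain ⟨hBi, hfu, hfd, hinf⟩ := hM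
  refine sat_of_deriv hBi (.inr hfd) (fun χ h => ?_) hd w
  rcases h with h | h | h
  exacts [sat_of_axDP hBi hfu h, sat_of_axN hBi hinf h, sat_of_axCD hBi hfu hfd h]

theorem IsGS4.sat_of_GS4 (hM : M.IsGS4) {φ : Fml} (hd : GS4 φ) (w : M.W) : M.Sat φ w := by
  obtain ⟨⟨⟨hBi, hbu⟩, hfu, hinf⟩, hlin⟩ := hM
  refine sat_of_deriv hBi (.inl hbu) (fun χ h => ?_) hd w
  rcases h with h | h | h | h
  exacts [sat_of_axDP hBi hfu h, sat_of_axN hBi hinf h, sat_of_axFS2 hBi hfu hbu h,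
    sat_of_axGD hBi hlin h]

theorem IsGS4c.sat_of_GS4c (hM : M.IsGS4c) {φ : Fml} (hd : GS4c φ) (w : M.W) :
    M.Sat φ w := by
  obtain ⟨⟨⟨⟨hBi, hbu⟩, hfu, hinf⟩, hlin⟩, hfd⟩ := hM
  refine sat_of_deriv hBi (.inl hbu) (fun χ h => ?_) hd w
  rcases h with h | h | h | h | h
  exacts [sat_of_axDP hBi hfu h, sat_of_axN hBi hinf h, sat_of_axFS2 hBi hfu hbu h,
    sat_of_axGD hBi hlin h, sat_of_axCD hBi hfu hfd h]

end KModel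

theorem semConseq_of_synConseq {Ax : Fml → Prop} {C : KModel.{u} → Prop}
    (hBi : ∀ M, C M → M.IsBiInt) (hsound : ∀ M, C M → ∀ φ, Deriv Ax φ → ∀ w, M.Sat φ w)
    {Γ : Set Fml} {φ : Fml} (h : SynConseq (Deriv Ax) Γ φ) : SemConseq.{u} C Γ φ := by
  obtain ⟨l, hl, hd⟩ := h
  intro M hC w _ hΓ
  exact hsound M hC _ hd w w ((hBi M hC).le_refl_s5 w)
    (KModel.sat_conjList fun ψ hψ => hΓ ψ (hl ψ hψ))

namespace Canonical

variable {Ax : Fml → Prop} {T : Set Fml} {φ ψ : Fml}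

structure IsPrimeTheory (Ax : Fml → Prop) (T : Set Fml) : Prop where
  closed : ∀ φ, SynConseq (Deriv Ax) T φ → φ ∈ T
  mem_or : ∀ {φ ψ}, φ.or ψ ∈ T → φ ∈ T ∨ ψ ∈ T
  bot_not_mem : Fml.bot ∉ T

namespace IsPrimeTheory

theorem conjList_mem (hT : IsPrimeTheory Ax T) {l : List Fml} (h : ∀ ψ ∈ l, ψ ∈ T) :
    conjList l ∈ T :=
  hT.closed _ ⟨l, h, .imp_self _⟩

theorem mem_of_imp (hT : IsPrimeTheory Ax T) (h : φ ∈ T) (hd : Deriv Ax (φ.imp ψ)) : ψ ∈ T :=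
  hT.closed ψ ⟨[φ], by simpa using h, (Deriv.andE₁ _ _).imp_trans hd⟩

theorem mem_of_deriv (hT : IsPrimeTheory Ax T) (hd : Deriv Ax φ) : φ ∈ T :=
  hT.closed φ ⟨[], by simp, hd.weaken _⟩

theorem and_mem (hT : IsPrimeTheory Ax T) (hφ : φ ∈ T) (hψ : ψ ∈ T) : φ.and ψ ∈ T :=
  hT.closed _ ⟨[φ, ψ], by simp [hφ, hψ],
    .imp_and (.andE₁ _ _) ((Deriv.andE₂ _ _).imp_trans (.andE₁ _ _))⟩

theorem mem_mp (hT : IsPrimeTheory Ax T) (h : φ.imp ψ ∈ T) (hφ : φ ∈ T) : ψ ∈ T :=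
  hT.mem_of_imp (hT.and_mem h hφ) (.uncurry (.imp_self _))

theorem box_conjList_mem (hT : IsPrimeTheory Ax T) {l : List Fml} (h : ∀ ψ ∈ l, ψ.box ∈ T) :
    (conjList l).box ∈ T := by
  induction l with
  | nil => exact hT.mem_of_deriv Deriv.top.nec
  | cons a l ih =>
    exact hT.mem_of_imp (hT.and_mem (h a List.mem_cons_self)
      (ih fun ψ hψ => h ψ (List.mem_cons_of_mem a hψ))) (.box_and_box _ _)

theorem dia_bot_not_mem (hT : IsPrimeTheory Ax T) (hN : AxN ≤ Ax) : Fml.bot.dia ∉ T :=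
  fun h => hT.bot_not_mem (hT.mem_of_imp h (.axN hN))

theorem not_synConseq (hT : IsPrimeTheory Ax T) (h : φ ∉ T) : ¬ SynConseq (Deriv Ax) T φ :=
  fun hd => h (hT.closed φ hd)

end IsPrimeTheory

structure IsIdeal (Ax : Fml → Prop) (I : Fml → Prop) : Prop where
  of_imp : ∀ {φ ψ}, Deriv Ax (φ.imp ψ) → I ψ → I φ
  or : ∀ {φ ψ}, I φ → I ψ → I (φ.or ψ)
  bot : I Fml.bot

def Avoids (I : Fml → Prop) (S : Set Fml) : Prop :=
  ∀ l : List Fml, (∀ x ∈ l, x ∈ S) → ¬ I (conjList l)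

theorem Avoids.not_of_mem {I : Fml → Prop} (hI : IsIdeal Ax I) (hT : Avoids I T) (h : φ ∈ T) :
    ¬ I φ :=
  fun hφ => hT [φ] (by simpa using h) (hI.of_imp (.andE₁ _ _) hφ)

theorem isOfFiniteCharacter_avoids (I : Fml → Prop) :
    Order.IsOfFiniteCharacter {S | Avoids I S} := fun _ =>
  ⟨fun h _ hy _ l hl => h l fun x hx => hy (hl x hx),
    fun h l hl => h {x | x ∈ l} (fun x hx => hl x hx) (List.finite_toSet l) l fun _ hx => hx⟩

theorem exists_isPrimeTheory_avoids {I : Fml → Prop} (hI : IsIdeal Ax I) {S : Set Fml}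
    (hS : Avoids I S) :
    ∃ T, S ⊆ T ∧ IsPrimeTheory Ax T ∧ Avoids I T ∧
      ∀ α ∉ T, ∃ l : List Fml, (∀ x ∈ l, x ∈ T) ∧ I ((conjList l).and α) := by
  obtain ⟨T, hST, hTav, hTmax⟩ := (isOfFiniteCharacter_avoids I).exists_maximal hS
  have hext : ∀ α ∉ T, ∃ l : List Fml, (∀ x ∈ l, x ∈ T) ∧ I ((conjList l).and α) := by
    intro α hα
    have hins : ¬ Avoids I (insert α T) := fun h =>
      hα (hTmax h (Set.subset_insert α T) (Set.mem_insert α T))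
    simp only [Avoids, not_forall, not_not] at hins
    obtain ⟨l, hl, hIl⟩ := hins
    obtain ⟨l', hl', hd⟩ := Deriv.exists_conjList_insert hl
    exact ⟨l', hl', hI.of_imp hd hIl⟩
  refine ⟨T, hST, ⟨fun ψ ⟨m, hm, hd⟩ => ?_, fun {φ₁ φ₂} hor => ?_, fun hbot => ?_⟩, hTav, hext⟩
  · by_contra hψ
    obtain ⟨l, hl, hIl⟩ := hext ψ hψ
    refine hTav (m ++ l) (fun x hx => (List.mem_append.mp hx).elim (hm x) (hl x)) (hI.of_imp ?_ hIl)
    exact .imp_and (Deriv.conjList_imp_conjList fun _ => List.mem_append_right m)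
      ((Deriv.conjList_imp_conjList fun _ => List.mem_append_left l).imp_trans hd)
  · by_contra! hnot
    obtain ⟨l₁, hl₁, hI₁⟩ := hext φ₁ hnot.1
    obtain ⟨l₂, hl₂, hI₂⟩ := hext φ₂ hnot.2
    have hsplit := Deriv.or_and_imp (Ax := Ax) (φ := φ₁) (ψ := φ₂)
      (Deriv.conjList_imp_conjList fun _ => List.mem_append_left l₂)
      (Deriv.conjList_imp_conjList fun _ => List.mem_append_right l₁)
    refine hTav ((φ₁.or φ₂) :: (l₁ ++ l₂)) (fun x hx => ?_) (hI.of_imp hsplit (hI.or hI₁ hI₂))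
    rcases List.mem_cons.mp hx with rfl | hx
    exacts [hor, (List.mem_append.mp hx).elim (hl₁ x) (hl₂ x)]
  · exact hTav.not_of_mem hI hbot hI.bot

theorem isIdeal_imp (φ : Fml) : IsIdeal Ax fun c => Deriv Ax (c.imp φ) :=
  ⟨fun h₁ h₂ => h₁.imp_trans h₂, .or_elim, .exfalso φ⟩

theorem lindenbaum {Γ : Set Fml} (h : ¬ SynConseq (Deriv Ax) Γ φ) :
    ∃ T, Γ ⊆ T ∧ IsPrimeTheory Ax T ∧ φ ∉ T ∧ ∀ α ∉ T, α.imp φ ∈ T := by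
  obtain ⟨T, hΓT, hT, hTav, hext⟩ :=
    exists_isPrimeTheory_avoids (isIdeal_imp φ) fun l hl hd => h ⟨l, hl, hd⟩
  refine ⟨T, hΓT, hT, fun hφ => hTav.not_of_mem (isIdeal_imp φ) hφ (.imp_self φ), fun α hα => ?_⟩
  obtain ⟨l, hl, hd⟩ := hext α hα
  exact hT.mem_of_imp (hT.conjList_mem hl) hd.curry

structure Sq (T U : Set Fml) : Prop where
  mem_of_box_mem : ∀ {φ}, φ.box ∈ T → φ ∈ U
  dia_mem_of_mem : ∀ {φ}, φ ∈ U → φ.dia ∈ T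

theorem Sq.refl {T : Set Fml} (hT : IsPrimeTheory Ax T) : Sq T T :=
  ⟨fun h => hT.mem_of_imp h (.tBox _), fun h => hT.mem_of_imp h (.tDia _)⟩

theorem Sq.trans {T U V : Set Fml} (hT : IsPrimeTheory Ax T) (h₁ : Sq T U) (h₂ : Sq U V) :
    Sq T V :=
  ⟨fun h => h₂.mem_of_box_mem (h₁.mem_of_box_mem (hT.mem_of_imp h (.fourBox _))),
    fun h => hT.mem_of_imp (h₁.dia_mem_of_mem (h₂.dia_mem_of_mem h)) (.fourDia _)⟩

theorem isIdeal_not_mem {P : Set Fml} (hP : IsPrimeTheory Ax P) : IsIdeal Ax (· ∉ P) :=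
  ⟨fun hd h hφ => h (hP.mem_of_imp hφ hd), fun h₁ h₂ h => (hP.mem_or h).elim h₁ h₂,
    hP.bot_not_mem⟩

theorem isIdeal_dia_not_mem (hDP : AxDP ≤ Ax) (hN : AxN ≤ Ax) {Θ : Set Fml}
    (hΘ : IsPrimeTheory Ax Θ) : IsIdeal Ax fun c => c.dia ∉ Θ :=
  ⟨fun hd h hφ => h (hΘ.mem_of_imp hφ (.dia_mono hd)),
    fun h₁ h₂ h => (hΘ.mem_or (hΘ.mem_of_imp h (.axDP hDP _ _))).elim h₁ h₂,
    hΘ.dia_bot_not_mem hN⟩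

theorem exists_sq_superset (hDP : AxDP ≤ Ax) (hN : AxN ≤ Ax) {Θ X : Set Fml}
    (hΘ : IsPrimeTheory Ax Θ) (hX : ∀ l : List Fml, (∀ x ∈ l, x ∈ X) → (conjList l).dia ∈ Θ) :
    ∃ P, IsPrimeTheory Ax P ∧ Sq Θ P ∧ X ⊆ P := by
  have hI := isIdeal_dia_not_mem hDP hN hΘ
  have hS : Avoids (fun c => c.dia ∉ Θ) ({x | x.box ∈ Θ} ∪ X) := by
    intro l hl hnot
    obtain ⟨la, lb, hla, hlb, hd⟩ := Deriv.exists_conjList_split hl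
    refine hnot (hΘ.mem_of_imp (hΘ.mem_mp ?_ (hX lb hlb)) (.dia_mono hd))
    exact hΘ.mem_of_imp (hΘ.box_conjList_mem hla) (.box_imp_dia_imp_dia_and _ _)
  obtain ⟨P, hSP, hP, hPav, -⟩ := exists_isPrimeTheory_avoids hI hS
  exact ⟨P, hP, ⟨fun h => hSP (.inl h), fun h => of_not_not (hPav.not_of_mem hI h)⟩,
    fun x hx => hSP (.inr hx)⟩

theorem exists_sq_mem (hDP : AxDP ≤ Ax) (hN : AxN ≤ Ax) {Θ : Set Fml} (hΘ : IsPrimeTheory Ax Θ)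
    {χ : Fml} (hχ : χ.dia ∈ Θ) : ∃ P, IsPrimeTheory Ax P ∧ Sq Θ P ∧ χ ∈ P := by
  obtain ⟨P, hP, hsq, hχP⟩ := exists_sq_superset hDP hN hΘ (X := {χ}) fun l hl =>
    hΘ.mem_of_imp hχ (.dia_mono (.imp_conjList fun x hx => by
      rw [Set.mem_singleton_iff.mp (hl x hx)]; exact .imp_self χ))
  exact ⟨P, hP, hsq, hχP rfl⟩

theorem exists_forthUp_witness (hDP : AxDP ≤ Ax) (hN : AxN ≤ Ax) {Δ Δ' P₀ : Set Fml}
    (hΔ' : IsPrimeTheory Ax Δ') (hP₀ : IsPrimeTheory Ax P₀) (hsub : Δ ⊆ Δ') (hsq : Sq Δ P₀) :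
    ∃ P, IsPrimeTheory Ax P ∧ Sq Δ' P ∧ P₀ ⊆ P :=
  exists_sq_superset hDP hN hΔ' fun _ hl => hsub (hsq.dia_mem_of_mem (hP₀.conjList_mem hl))

theorem IsPrimeTheory.exists_dia_imp_conjList {P : Set Fml} (hP : IsPrimeTheory Ax P)
    {l : List Fml} (hl : ∀ x ∈ l, x ∈ Fml.dia '' P) :
    ∃ β ∈ P, Deriv Ax (β.dia.imp (conjList l)) := by
  induction l with
  | nil => exact ⟨conjList [], hP.mem_of_deriv .top, .weaken .top _⟩
  | cons a l ih =>
    obtain ⟨b, hb, rfl⟩ := hl a List.mem_cons_self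
    obtain ⟨β, hβ, hd⟩ := ih fun x hx => hl x (List.mem_cons_of_mem _ hx)
    exact ⟨b.and β, hP.and_mem hb hβ,
      .imp_and (.dia_mono (.andE₁ _ _)) ((Deriv.dia_mono (.andE₂ _ _)).imp_trans hd)⟩

theorem exists_backUp_witness (hFS2 : AxFS2 ≤ Ax) {Δ P P' : Set Fml}
    (hΔ : IsPrimeTheory Ax Δ) (hP' : IsPrimeTheory Ax P') (hsq : Sq Δ P) (hsub : P ⊆ P') :
    ∃ Θ, IsPrimeTheory Ax Θ ∧ Δ ⊆ Θ ∧ Sq Θ P' := by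
  let I : Fml → Prop := fun c => ∃ δ ∉ P', Deriv Ax (c.imp δ.box)
  have hI : IsIdeal Ax I :=
    ⟨fun hd ⟨δ, hδ, h⟩ => ⟨δ, hδ, hd.imp_trans h⟩,
      fun ⟨δ₁, hδ₁, h₁⟩ ⟨δ₂, hδ₂, h₂⟩ => ⟨δ₁.or δ₂, fun h => (hP'.mem_or h).elim hδ₁ hδ₂,
        .or_elim (h₁.imp_trans (.box_mono (.orI₁ _ _))) (h₂.imp_trans (.box_mono (.orI₂ _ _)))⟩,
      ⟨Fml.bot, hP'.bot_not_mem, .exfalso _⟩⟩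
  have hS : Avoids I (Δ ∪ Fml.dia '' P') := by
    rintro l hl ⟨δ, hδ, hd⟩
    obtain ⟨la, lb, hla, hlb, hsplit⟩ := Deriv.exists_conjList_split hl
    obtain ⟨β, hβ, hβd⟩ := hP'.exists_dia_imp_conjList hlb
    have hboxΔ : (β.dia.imp δ.box) ∈ Δ := hΔ.mem_of_imp (hΔ.conjList_mem hla)
      (.curry ((Deriv.imp_and (.andE₁ _ _) ((Deriv.andE₂ _ _).imp_trans hβd)).imp_trans
        (hsplit.imp_trans hd)))
    exact hδ (hP'.mem_mp (hsub (hsq.mem_of_box_mem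
      (hΔ.mem_of_imp hboxΔ (.axFS2 hFS2 β δ)))) hβ)
  obtain ⟨Θ, hSΘ, hΘ, hΘav, -⟩ := exists_isPrimeTheory_avoids hI hS
  refine ⟨Θ, hΘ, fun x hx => hSΘ (.inl hx), ⟨fun {δ} h => ?_, fun h => hSΘ (.inr ⟨_, h, rfl⟩)⟩⟩
  by_contra hδ
  exact hΘav.not_of_mem hI h ⟨δ, hδ, .imp_self _⟩

theorem exists_sq_of_cd (hDP : AxDP ≤ Ax) (hN : AxN ≤ Ax) (hCD : AxCD ≤ Ax) {Θ : Set Fml}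
    (hΘ : IsPrimeTheory Ax Θ) {J : Fml → Prop} (hJ : IsIdeal Ax J)
    (hJΘ : ∀ p, J p → p.box ∉ Θ) : ∃ P, IsPrimeTheory Ax P ∧ Sq Θ P ∧ ∀ p ∈ P, ¬ J p := by
  have hD := isIdeal_dia_not_mem hDP hN hΘ
  let I : Fml → Prop := fun c => ∃ q p : Fml, q.dia ∉ Θ ∧ J p ∧ Deriv Ax (c.imp (q.or p))
  have hI : IsIdeal Ax I :=
    ⟨fun hd ⟨q, p, hq, hp, h⟩ => ⟨q, p, hq, hp, hd.imp_trans h⟩,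
      fun ⟨q₁, p₁, hq₁, hp₁, h₁⟩ ⟨q₂, p₂, hq₂, hp₂, h₂⟩ =>
        ⟨q₁.or q₂, p₁.or p₂, hD.or hq₁ hq₂, hJ.or hp₁ hp₂,
          .or_elim (h₁.imp_trans (.or_mono (.orI₁ _ _) (.orI₁ _ _)))
            (h₂.imp_trans (.or_mono (.orI₂ _ _) (.orI₂ _ _)))⟩,
      ⟨Fml.bot, Fml.bot, hD.bot, hJ.bot, .exfalso _⟩⟩
  have hS : Avoids I {x | x.box ∈ Θ} := by
    rintro l hl ⟨q, p, hq, hp, hd⟩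
    have hpq : (p.or q).box ∈ Θ :=
      hΘ.mem_of_imp (hΘ.box_conjList_mem hl) (.box_mono (hd.imp_trans (.or_swap _ _)))
    exact (hΘ.mem_or (hΘ.mem_of_imp hpq (.axCD hCD p q))).elim (hJΘ p hp) hq
  obtain ⟨P, hSP, hP, hPav, -⟩ := exists_isPrimeTheory_avoids hI hS
  refine ⟨P, hP, ⟨fun h => hSP h, fun {β} h => ?_⟩, fun p h hp => ?_⟩
  · by_contra hβ
    exact hPav.not_of_mem hI h ⟨β, Fml.bot, hβ, hJ.bot, .orI₁ _ _⟩
  · exact hPav.not_of_mem hI h ⟨Fml.bot, p, hD.bot, hp, .orI₂ _ _⟩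

theorem exists_forthDown_witness (hDP : AxDP ≤ Ax) (hN : AxN ≤ Ax) (hCD : AxCD ≤ Ax)
    {Δ Θ P : Set Fml} (hΔ : IsPrimeTheory Ax Δ) (hP : IsPrimeTheory Ax P) (hsub : Δ ⊆ Θ)
    (hsq : Sq Θ P) : ∃ P₀, IsPrimeTheory Ax P₀ ∧ Sq Δ P₀ ∧ P₀ ⊆ P := by
  obtain ⟨P₀, hP₀, hsq₀, hP₀P⟩ := exists_sq_of_cd hDP hN hCD hΔ (isIdeal_not_mem hP)
    fun p hp h => hp (hsq.mem_of_box_mem (hsub h))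
  exact ⟨P₀, hP₀, hsq₀, fun p h => of_not_not (hP₀P p h)⟩

def HasBoxWitnesses (Ax : Fml → Prop) : Prop :=
  ∀ Δ, IsPrimeTheory Ax Δ → ∀ ψ : Fml, ψ.box ∉ Δ →
    ∃ Θ P, IsPrimeTheory Ax Θ ∧ IsPrimeTheory Ax P ∧ Δ ⊆ Θ ∧ Sq Θ P ∧ ψ ∉ P

theorem hasBoxWitnesses_of_cd (hDP : AxDP ≤ Ax) (hN : AxN ≤ Ax) (hCD : AxCD ≤ Ax) :
    HasBoxWitnesses Ax := by
  intro Δ hΔ ψ hψ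
  obtain ⟨Θ, hΔΘ, hΘ, hψΘ, -⟩ := lindenbaum (hΔ.not_synConseq hψ)
  obtain ⟨P, hP, hsq, hPψ⟩ := exists_sq_of_cd hDP hN hCD hΘ (isIdeal_imp ψ)
    fun p hp h => hψΘ (hΘ.mem_of_imp h (.box_mono hp))
  exact ⟨Θ, P, hΘ, hP, hΔΘ, hsq, fun h => hPψ ψ h (.imp_self ψ)⟩

theorem hasBoxWitnesses_of_fs2 (hFS2 : AxFS2 ≤ Ax) : HasBoxWitnesses Ax := by
  intro Δ hΔ ψ hψ
  obtain ⟨Θ, hΔΘ, hΘ, hψΘ, hmax⟩ := lindenbaum (hΔ.not_synConseq hψ)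
  let I : Fml → Prop := fun c => (c.imp ψ).box ∈ Θ
  have hI : IsIdeal Ax I :=
    ⟨fun hd h => hΘ.mem_of_imp h (.box_mono (.imp_antitone hd)),
      fun h₁ h₂ => hΘ.mem_of_imp (hΘ.and_mem h₁ h₂)
        ((Deriv.box_and_box _ _).imp_trans (.box_mono (.uncurry (.orE _ _ ψ)))),
      hΘ.mem_of_deriv (Deriv.exfalso ψ).nec⟩
  have hS : Avoids I {x | x.box ∈ Θ} := fun l hl h =>
    hψΘ (hΘ.mem_mp (hΘ.mem_of_imp h (.kBox _ _)) (hΘ.box_conjList_mem hl))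
  obtain ⟨P, hSP, hP, hPav, -⟩ := exists_isPrimeTheory_avoids hI hS
  refine ⟨Θ, P, hΘ, hP, hΔΘ, ⟨fun h => hSP h, fun {β} h => ?_⟩,
    fun h => hPav.not_of_mem hI h (hΘ.mem_of_deriv (Deriv.imp_self ψ).nec)⟩
  -- by maximality of `Θ`, `◇β ∉ Θ` would put `◇β → □ψ`, hence by FS2 `□(β → ψ)`, into `Θ`
  by_contra hβ
  exact hPav.not_of_mem hI h (hΘ.mem_of_imp (hmax _ hβ) (.axFS2 hFS2 β ψ))

theorem subset_or_subset_of_gd (hGD : AxGD ≤ Ax) {Δ T₁ T₂ : Set Fml} (hΔ : IsPrimeTheory Ax Δ)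
    (hT₁ : IsPrimeTheory Ax T₁) (hT₂ : IsPrimeTheory Ax T₂) (h₁ : Δ ⊆ T₁) (h₂ : Δ ⊆ T₂) :
    T₁ ⊆ T₂ ∨ T₂ ⊆ T₁ := by
  by_contra! hcon
  obtain ⟨α, hα₁, hα₂⟩ := Set.not_subset.mp hcon.1
  obtain ⟨β, hβ₂, hβ₁⟩ := Set.not_subset.mp hcon.2
  rcases hΔ.mem_or (hΔ.mem_of_deriv (.axGD hGD α β)) with h | h
  · exact hβ₁ (hT₁.mem_mp (h₁ h) hα₁)
  · exact hα₂ (hT₂.mem_mp (h₂ h) hβ₂)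

def PrimeTheory (Ax : Fml → Prop) : Type := {T : Set Fml // IsPrimeTheory Ax T}

def canonicalModel (Ax : Fml → Prop) : KModel.{u} where
  W := ULift.{u} (PrimeTheory Ax)
  fallible := ∅
  le w v := w.down.1 ⊆ v.down.1
  sq w v := Sq w.down.1 v.down.1
  val p := {w | Fml.var p ∈ w.down.1}

theorem sat_canonicalModel_iff (hDP : AxDP ≤ Ax) (hN : AxN ≤ Ax) (hBox : HasBoxWitnesses Ax)
    (φ : Fml) (w : (canonicalModel.{u} Ax).W) : (canonicalModel.{u} Ax).Sat φ w ↔ φ ∈ w.down.1 := by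
  obtain ⟨⟨T, hT⟩⟩ := w
  induction φ generalizing T with
  | var p => exact Iff.rfl
  | bot => exact ⟨False.elim, fun h => hT.bot_not_mem h⟩
  | and φ ψ ihφ ihψ =>
    simp only [KModel.Sat, ihφ, ihψ]
    exact ⟨fun h => hT.and_mem h.1 h.2,
      fun h => ⟨hT.mem_of_imp h (.andE₁ _ _), hT.mem_of_imp h (.andE₂ _ _)⟩⟩
  | or φ ψ ihφ ihψ =>
    simp only [KModel.Sat, ihφ, ihψ]
    exact ⟨fun h => h.elim (hT.mem_of_imp · (.orI₁ _ _)) (hT.mem_of_imp · (.orI₂ _ _)),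
      hT.mem_or⟩
  | imp φ ψ ihφ ihψ =>
    refine ⟨fun h => ?_, fun h ⟨⟨U, hU⟩⟩ hTU hφ => (ihψ U hU).mpr
      (hU.mem_mp (hTU h) ((ihφ U hU).mp hφ))⟩
    by_contra hnot
    have hcons : ¬ SynConseq (Deriv Ax) (insert φ T) ψ := fun ⟨l, hl, hd⟩ => by
      obtain ⟨l', hl', hsplit⟩ := Deriv.exists_conjList_insert hl
      exact hnot (hT.mem_of_imp (hT.conjList_mem hl') (hsplit.imp_trans hd).curry)
    obtain ⟨U, hTU, hU, hψU, -⟩ := lindenbaum hcons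
    exact hψU ((ihψ U hU).mp (h ⟨⟨U, hU⟩⟩ (fun x hx => hTU (.inr hx))
      ((ihφ U hU).mpr (hTU (.inl rfl)))))
  | dia φ ih =>
    refine ⟨fun h => ?_, fun h ⟨⟨U, hU⟩⟩ hTU => ?_⟩
    · obtain ⟨⟨⟨V, hV⟩⟩, hsq, hφ⟩ := h ⟨⟨T, hT⟩⟩ subset_rfl
      exact hsq.dia_mem_of_mem ((ih V hV).mp hφ)
    · obtain ⟨P, hP, hsq, hφP⟩ := exists_sq_mem hDP hN hU (hTU h)
      exact ⟨⟨⟨P, hP⟩⟩, hsq, (ih P hP).mpr hφP⟩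
  | box φ ih =>
    refine ⟨fun h => ?_, fun h _ ⟨⟨V, hV⟩⟩ hTU hsq => (ih V hV).mpr (hsq.mem_of_box_mem (hTU h))⟩
    by_contra hnot
    obtain ⟨Θ, P, hΘ, hP, hTΘ, hsq, hφP⟩ := hBox T hT φ hnot
    exact hφP ((ih P hP).mp (h ⟨⟨Θ, hΘ⟩⟩ ⟨⟨P, hP⟩⟩ hTΘ hsq))

theorem isBiInt_canonicalModel : (canonicalModel.{u} Ax).IsBiInt :=
  ⟨fun _ => subset_rfl, fun _ _ _ => Set.Subset.trans, fun w => Sq.refl w.down.2,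
    fun u _ _ => Sq.trans u.down.2, fun _ _ h => h.elim, fun _ _ h => h.elim,
    fun _ _ _ h hle => hle h, fun _ _ h => h.elim⟩

theorem infallible_canonicalModel : (canonicalModel.{u} Ax).Infallible := rfl

theorem forthUp_canonicalModel (hDP : AxDP ≤ Ax) (hN : AxN ≤ Ax) :
    (canonicalModel.{u} Ax).ForthUp := fun _ w' v hle hsq =>
  let ⟨P, hP, hsq', hsub⟩ := exists_forthUp_witness hDP hN w'.down.2 v.down.2 hle hsq
  ⟨⟨⟨P, hP⟩⟩, hsub, hsq'⟩

theorem backUp_canonicalModel (hFS2 : AxFS2 ≤ Ax) : (canonicalModel.{u} Ax).BackUp :=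
  fun w _ v' hsq hle =>
  let ⟨Θ, hΘ, hsub, hsq'⟩ := exists_backUp_witness hFS2 w.down.2 v'.down.2 hsq hle
  ⟨⟨⟨Θ, hΘ⟩⟩, hsub, hsq'⟩

theorem forthDown_canonicalModel (hDP : AxDP ≤ Ax) (hN : AxN ≤ Ax) (hCD : AxCD ≤ Ax) :
    (canonicalModel.{u} Ax).ForthDown := fun w _ v' hle hsq =>
  let ⟨P₀, hP₀, hsq', hsub⟩ :=
    exists_forthDown_witness hDP hN hCD w.down.2 v'.down.2 hle hsq
  ⟨⟨⟨P₀, hP₀⟩⟩, hsq', hsub⟩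

theorem upLinear_canonicalModel (hGD : AxGD ≤ Ax) : (canonicalModel.{u} Ax).UpLinear :=
  fun w u v h₁ h₂ => subset_or_subset_of_gd hGD w.down.2 u.down.2 v.down.2 h₁ h₂

theorem isIS4_canonicalModel (hDP : AxDP ≤ Ax) (hN : AxN ≤ Ax) (hFS2 : AxFS2 ≤ Ax) :
    (canonicalModel.{u} Ax).IsIS4 :=
  ⟨⟨isBiInt_canonicalModel, backUp_canonicalModel hFS2⟩, forthUp_canonicalModel hDP hN,
    infallible_canonicalModel⟩

theorem isS4I_canonicalModel (hDP : AxDP ≤ Ax) (hN : AxN ≤ Ax) (hCD : AxCD ≤ Ax) :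
    (canonicalModel.{u} Ax).IsS4I :=
  ⟨isBiInt_canonicalModel, forthUp_canonicalModel hDP hN, forthDown_canonicalModel hDP hN hCD,
    infallible_canonicalModel⟩

theorem isGS4_canonicalModel (hDP : AxDP ≤ Ax) (hN : AxN ≤ Ax) (hFS2 : AxFS2 ≤ Ax)
    (hGD : AxGD ≤ Ax) : (canonicalModel.{u} Ax).IsGS4 :=
  ⟨isIS4_canonicalModel hDP hN hFS2, upLinear_canonicalModel hGD⟩

theorem isGS4c_canonicalModel (hDP : AxDP ≤ Ax) (hN : AxN ≤ Ax) (hFS2 : AxFS2 ≤ Ax)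
    (hGD : AxGD ≤ Ax) (hCD : AxCD ≤ Ax) : (canonicalModel.{u} Ax).IsGS4c :=
  ⟨isGS4_canonicalModel hDP hN hFS2 hGD, forthDown_canonicalModel hDP hN hCD⟩

theorem synConseq_of_semConseq {C : KModel.{u} → Prop} (hDP : AxDP ≤ Ax) (hN : AxN ≤ Ax)
    (hBox : HasBoxWitnesses Ax) (hC : C (canonicalModel.{u} Ax)) {Γ : Set Fml} {φ : Fml}
    (h : SemConseq.{u} C Γ φ) : SynConseq (Deriv Ax) Γ φ := by
  by_contra hφ
  obtain ⟨T, hΓT, hT, hφT, -⟩ := lindenbaum hφ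
  have htruth := sat_canonicalModel_iff.{u} hDP hN hBox (w := ⟨⟨T, hT⟩⟩)
  exact hφT ((htruth φ).mp (h _ hC _ (Set.notMem_empty _) fun ψ hψ => (htruth ψ).mpr (hΓT hψ)))

theorem synConseq_of_semConseq_isIS4 (hDP : AxDP ≤ Ax) (hN : AxN ≤ Ax) (hFS2 : AxFS2 ≤ Ax)
    {Γ : Set Fml} {φ : Fml} : SemConseq.{u} KModel.IsIS4 Γ φ → SynConseq (Deriv Ax) Γ φ :=
  synConseq_of_semConseq hDP hN (hasBoxWitnesses_of_fs2 hFS2) (isIS4_canonicalModel hDP hN hFS2)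

theorem synConseq_of_semConseq_isS4I (hDP : AxDP ≤ Ax) (hN : AxN ≤ Ax) (hCD : AxCD ≤ Ax)
    {Γ : Set Fml} {φ : Fml} : SemConseq.{u} KModel.IsS4I Γ φ → SynConseq (Deriv Ax) Γ φ :=
  synConseq_of_semConseq hDP hN (hasBoxWitnesses_of_cd hDP hN hCD)
    (isS4I_canonicalModel hDP hN hCD)

theorem synConseq_of_semConseq_isGS4 (hDP : AxDP ≤ Ax) (hN : AxN ≤ Ax) (hFS2 : AxFS2 ≤ Ax)
    (hGD : AxGD ≤ Ax) {Γ : Set Fml} {φ : Fml} :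
    SemConseq.{u} KModel.IsGS4 Γ φ → SynConseq (Deriv Ax) Γ φ :=
  synConseq_of_semConseq hDP hN (hasBoxWitnesses_of_fs2 hFS2)
    (isGS4_canonicalModel hDP hN hFS2 hGD)

theorem synConseq_of_semConseq_isGS4c (hDP : AxDP ≤ Ax) (hN : AxN ≤ Ax) (hFS2 : AxFS2 ≤ Ax)
    (hGD : AxGD ≤ Ax) (hCD : AxCD ≤ Ax) {Γ : Set Fml} {φ : Fml} :
    SemConseq.{u} KModel.IsGS4c Γ φ → SynConseq (Deriv Ax) Γ φ :=
  synConseq_of_semConseq hDP hN (hasBoxWitnesses_of_fs2 hFS2)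
    (isGS4c_canonicalModel hDP hN hFS2 hGD hCD)

end Canonical

/-- **Soundness and strong completeness of IS4, S4I, GS4 and GS4c.** For each of
the logics Λ ∈ {IS4, S4I, GS4, GS4c}, and for every set `Γ` of `L`-formulas and
every `L`-formula `φ`: `Γ ⊨_Λ φ` if and only if `Γ ⊢_Λ φ`, where `⊨_Λ` is local
semantic consequence on the class of Λ frames. -/
theorem regular_soundness_strong_completeness (Γ : Set Fml) (φ : Fml) :
    (SemConseq.{u} KModel.IsIS4 Γ φ ↔ SynConseq IS4 Γ φ) ∧
    (SemConseq.{u} KModel.IsS4I Γ φ ↔ SynConseq S4I Γ φ) ∧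
    (SemConseq.{u} KModel.IsGS4 Γ φ ↔ SynConseq GS4 Γ φ) ∧
    (SemConseq.{u} KModel.IsGS4c Γ φ ↔ SynConseq GS4c Γ φ) := by
  open Canonical in
  refine ⟨⟨synConseq_of_semConseq_isIS4 (fun _ => .inl) (fun _ h => .inr (.inl h))
        fun _ h => .inr (.inr h),
      semConseq_of_synConseq (fun _ hM => hM.1.1) fun _ hM _ => hM.sat_of_IS4⟩,
    ⟨synConseq_of_semConseq_isS4I (fun _ => .inl) (fun _ h => .inr (.inl h))
        fun _ h => .inr (.inr h),
      semConseq_of_synConseq (fun _ hM => hM.1) fun _ hM _ => hM.sat_of_S4I⟩,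
    ⟨synConseq_of_semConseq_isGS4 (fun _ => .inl) (fun _ h => .inr (.inl h))
        (fun _ h => .inr (.inr (.inl h))) fun _ h => .inr (.inr (.inr h)),
      semConseq_of_synConseq (fun _ hM => hM.1.1.1) fun _ hM _ => hM.sat_of_GS4⟩,
    ⟨synConseq_of_semConseq_isGS4c (fun _ => .inl) (fun _ h => .inr (.inl h))
        (fun _ h => .inr (.inr (.inl h))) (fun _ h => .inr (.inr (.inr (.inl h))))
        fun _ h => .inr (.inr (.inr (.inr h))),
      semConseq_of_synConseq (fun _ hM => hM.1.1.1.1) fun _ hM _ => hM.sat_of_GS4c⟩⟩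
end

section
/- Let M = (W, W⊥, ≼, ⊑, V) be a bi-intuitionistic model, Σ a set of L-formulas, and ∼ a Σ-bisimulation on M that is also an equivalence relation. Then: (1) if ⊑ is forth–up confluent, so is the modal relation of M/∼; (2) if ⊑ is back–up confluent, so is the modal relation of M/∼; (3) if ≼ is upward linear, so is the intuitionistic relation of M/∼. -/
universe u

namespace KModel

/-- The positive part `ℓ+(w)` of the `Σ`-label of a world. -/
def labelPlus (M : KModel.{u}) (S : Set Fml) (w : M.W) : Set Fml :=
  {φ | φ ∈ S ∧ M.Sat φ w}

/-- The part `ℓ◇(w)` of the `Σ`-label of a world: formulas of `Σ` satisfied at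
no `⊑`-successor of `w`. -/
def labelDia (M : KModel.{u}) (S : Set Fml) (w : M.W) : Set Fml :=
  {φ | φ ∈ S ∧ ∀ v, M.sq w v → ¬ M.Sat φ v}

/-- `Z` is a `Σ`-bisimulation on `M`: it is forth–up and back–up confluent for
`≼` and preserves `Σ`-labels. -/
def IsBisim (M : KModel.{u}) (S : Set Fml) (Z : M.W → M.W → Prop) : Prop :=
  (∀ w w' v, M.le w w' → Z w v → ∃ v', M.le v v' ∧ Z w' v') ∧
  (∀ w v v', Z w v → M.le v v' → ∃ w', M.le w w' ∧ Z w' v') ∧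
  (∀ w v, Z w v →
    labelPlus M S w = labelPlus M S v ∧ labelDia M S w = labelDia M S v)

/-- The greatest `Σ`-bisimulation on `M`: the union of all `Σ`-bisimulations. -/
def GBisim (M : KModel.{u}) (S : Set Fml) (w v : M.W) : Prop :=
  ∃ Z, IsBisim M S Z ∧ Z w v

/-- The quotient of a model by a relation `r` on its worlds: worlds are the
classes; a class is fallible iff it contains a fallible world; `[w] ≼ [v]` iff
`w' ≼ v'` for some `w' ∼ w`, `v' ∼ v`; the modal relation is the transitive
closure of the analogous relation; and `[w] ∈ V(p)` iff `w ∈ V(p)`. -/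
def QuotModel (M : KModel.{u}) (r : M.W → M.W → Prop) : KModel.{u} where
  W := Quot r
  fallible := {x | ∃ w, Quot.mk r w = x ∧ w ∈ M.fallible}
  le := fun x y => ∃ w v, Quot.mk r w = x ∧ Quot.mk r v = y ∧ M.le w v
  sq := Relation.TransGen
    (fun x y => ∃ w v, Quot.mk r w = x ∧ Quot.mk r v = y ∧ M.sq w v)
  val := fun p => {x | ∃ w, Quot.mk r w = x ∧ w ∈ M.val p}

end KModel

/-- A set of formulas closed under subformulas. -/
def SubClosed (S : Set Fml) : Prop :=
  (∀ φ ψ : Fml, φ.and ψ ∈ S → φ ∈ S ∧ ψ ∈ S) ∧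
  (∀ φ ψ : Fml, φ.or ψ ∈ S → φ ∈ S ∧ ψ ∈ S) ∧
  (∀ φ ψ : Fml, φ.imp ψ ∈ S → φ ∈ S ∧ ψ ∈ S) ∧
  (∀ φ : Fml, φ.dia ∈ S → φ ∈ S) ∧
  (∀ φ : Fml, φ.box ∈ S → φ ∈ S)

/-!
The modal relation of `M/∼` is the transitive closure of the image of `⊑` under the quotient
map, and its intuitionistic relation is the image of `≼`. Since `∼` is generated by a relation
that is confluent with `≼` in both directions, a `≼`-step out of a class can be started at any
representative; so each frame condition of `M` passes to the image relations, and confluence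
survives taking the transitive closure. Back–up confluence of `⊑` is forth–up confluence of its
converse, which lets one argument serve both confluence conditions.
-/

open Relation Function

section Confluence

variable {α : Type*} {le s : α → α → Prop}

def ForthUpConfluent (le s : α → α → Prop) : Prop :=
  ∀ w w' v, le w w' → s w v → ∃ v', le v v' ∧ s w' v'

def BackUpConfluent (le s : α → α → Prop) : Prop :=
  ∀ w v v', s w v → le v v' → ∃ w', le w w' ∧ s w' v'

theorem forthUpConfluent_swap_iff :
    ForthUpConfluent le (swap s) ↔ BackUpConfluent le s :=
  ⟨fun h w v v' hs hle => h v v' w hle hs, fun h v v' w hle hs => h w v v' hs hle⟩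

theorem Relation.swap_transGen (s : α → α → Prop) : swap (TransGen s) = TransGen (swap s) :=
  funext₂ fun _ _ => propext transGen_swap.symm

theorem Relation.swap_map {β γ δ : Type*} (s : β → γ → Prop) (f : β → δ) (g : γ → δ) :
    swap (Relation.Map s f g) = Relation.Map (swap s) g f :=
  funext₂ fun _ _ => propext
    ⟨fun ⟨a, b, h, ha, hb⟩ => ⟨b, a, h, hb, ha⟩, fun ⟨b, a, h, hb, ha⟩ => ⟨a, b, h, ha, hb⟩⟩

namespace ForthUpConfluent

theorem transGen (h : ForthUpConfluent le s) : ForthUpConfluent le (TransGen s) := by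
  intro w w' v hww' hwv
  induction hwv with
  | single hwv =>
    obtain ⟨v', hvv', hw'v'⟩ := h _ _ _ hww' hwv
    exact ⟨v', hvv', .single hw'v'⟩
  | tail _ hbc ih =>
    obtain ⟨b', hbb', hw'b'⟩ := ih
    obtain ⟨c', hcc', hb'c'⟩ := h _ _ _ hbb' hbc
    exact ⟨c', hcc', hw'b'.tail hb'c'⟩

theorem reflTransGen (h : ForthUpConfluent le s) : ForthUpConfluent le (ReflTransGen s) := by
  intro w w' v hww' hwv
  obtain rfl | hwv := reflTransGen_iff_eq_or_transGen.mp hwv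
  · exact ⟨w', hww', .refl⟩
  · obtain ⟨v', hvv', hw'v'⟩ := h.transGen w w' v hww' hwv
    exact ⟨v', hvv', hw'v'.to_reflTransGen⟩

theorem symmGen (h : ForthUpConfluent le s) (h' : ForthUpConfluent le (swap s)) :
    ForthUpConfluent le (SymmGen s) := by
  rintro w w' v hww' (hwv | hvw)
  · obtain ⟨v', hvv', hw'v'⟩ := h w w' v hww' hwv
    exact ⟨v', hvv', .of_rel hw'v'⟩
  · obtain ⟨v', hvv', hv'w'⟩ := h' w w' v hww' hvw
    exact ⟨v', hvv', .of_rel_symm hv'w'⟩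

theorem eqvGen (h : ForthUpConfluent le s) (h' : ForthUpConfluent le (swap s)) :
    ForthUpConfluent le (EqvGen s) := by
  rw [← EqvGen.reflTransGen_symmGen]
  exact (h.symmGen h').reflTransGen

end ForthUpConfluent

theorem BackUpConfluent.transGen (h : BackUpConfluent le s) :
    BackUpConfluent le (TransGen s) := by
  rw [← forthUpConfluent_swap_iff, swap_transGen]
  exact (forthUpConfluent_swap_iff.mpr h).transGen

end Confluence

section QuotientRelation

variable {α : Type*} {r le s : α → α → Prop}

theorem exists_le_mk_of_map_mk (hr : ForthUpConfluent le (EqvGen r)) {w : α} {y : Quot r}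
    (h : Relation.Map le (Quot.mk r) (Quot.mk r) (Quot.mk r w) y) :
    ∃ c, le w c ∧ Quot.mk r c = y := by
  obtain ⟨a, b, hab, ha, rfl⟩ := h
  obtain ⟨c, hwc, hbc⟩ := hr a b w hab (Quot.eq.mp ha)
  exact ⟨c, hwc, (Quot.eq.mpr hbc).symm⟩

theorem ForthUpConfluent.map_quot (hs : ForthUpConfluent le s)
    (hr : ForthUpConfluent le (EqvGen r)) :
    ForthUpConfluent (Relation.Map le (Quot.mk r) (Quot.mk r))
      (Relation.Map s (Quot.mk r) (Quot.mk r)) := by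
  rintro _ x' _ hxx' ⟨w, v, hwv, rfl, rfl⟩
  obtain ⟨c, hwc, rfl⟩ := exists_le_mk_of_map_mk hr hxx'
  obtain ⟨v', hvv', hcv'⟩ := hs w c v hwc hwv
  exact ⟨Quot.mk r v', ⟨v, v', hvv', rfl, rfl⟩, ⟨c, v', hcv', rfl, rfl⟩⟩

theorem BackUpConfluent.map_quot (hs : BackUpConfluent le s)
    (hr : ForthUpConfluent le (EqvGen r)) :
    BackUpConfluent (Relation.Map le (Quot.mk r) (Quot.mk r))
      (Relation.Map s (Quot.mk r) (Quot.mk r)) := by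
  rw [← forthUpConfluent_swap_iff, swap_map]
  exact (forthUpConfluent_swap_iff.mpr hs).map_quot hr

end QuotientRelation

namespace KModel

section

variable (M : KModel.{u}) (r : M.W → M.W → Prop)

theorem quotModel_le :
    (M.QuotModel r).le = Relation.Map M.le (Quot.mk r) (Quot.mk r) := by
  ext x y
  exact ⟨fun ⟨w, v, hw, hv, h⟩ => ⟨w, v, h, hw, hv⟩, fun ⟨w, v, h, hw, hv⟩ => ⟨w, v, hw, hv, h⟩⟩

theorem quotModel_sq :
    (M.QuotModel r).sq = TransGen (Relation.Map M.sq (Quot.mk r) (Quot.mk r)) := by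
  show TransGen _ = _
  congr 1
  ext x y
  exact ⟨fun ⟨w, v, hw, hv, h⟩ => ⟨w, v, h, hw, hv⟩, fun ⟨w, v, h, hw, hv⟩ => ⟨w, v, hw, hv, h⟩⟩

end

variable {M : KModel.{u}} {r : M.W → M.W → Prop}

theorem IsBisim.forthUpConfluent_eqvGen {S : Set Fml} (h : M.IsBisim S r) :
    ForthUpConfluent M.le (EqvGen r) :=
  ForthUpConfluent.eqvGen h.1 (forthUpConfluent_swap_iff.mpr h.2.1)

theorem ForthUp.quotModel (h : M.ForthUp) (hr : ForthUpConfluent M.le (EqvGen r)) :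
    (M.QuotModel r).ForthUp := by
  change ForthUpConfluent _ _
  rw [quotModel_le, quotModel_sq]
  exact (ForthUpConfluent.map_quot h hr).transGen

theorem BackUp.quotModel (h : M.BackUp) (hr : ForthUpConfluent M.le (EqvGen r)) :
    (M.QuotModel r).BackUp := by
  change BackUpConfluent _ _
  rw [quotModel_le, quotModel_sq]
  exact (BackUpConfluent.map_quot h hr).transGen

theorem UpLinear.quotModel (h : M.UpLinear) (hr : ForthUpConfluent M.le (EqvGen r)) :
    (M.QuotModel r).UpLinear := by
  intro x u v hxu hxv
  obtain ⟨w, rfl⟩ := Quot.exists_rep x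
  rw [quotModel_le] at hxu hxv ⊢
  obtain ⟨c, hwc, rfl⟩ := exists_le_mk_of_map_mk hr hxu
  obtain ⟨d, hwd, rfl⟩ := exists_le_mk_of_map_mk hr hxv
  exact (h w c d hwc hwd).imp (fun hcd => ⟨c, d, hcd, rfl, rfl⟩) (fun hdc => ⟨d, c, hdc, rfl, rfl⟩)

end KModel

theorem quotient_preserves_frame_conditions_general (M : KModel.{u})
    (S : Set Fml) (r : M.W → M.W → Prop) (hbis : M.IsBisim S r) :
    (M.ForthUp → (M.QuotModel r).ForthUp) ∧
    (M.BackUp → (M.QuotModel r).BackUp) ∧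
    (M.UpLinear → (M.QuotModel r).UpLinear) := by
  have hr := hbis.forthUpConfluent_eqvGen
  exact ⟨fun h => h.quotModel hr, fun h => h.quotModel hr, fun h => h.quotModel hr⟩

/-- **Preservation of frame conditions by bisimulation quotients.** Let `M` be a
bi-intuitionistic model, `Σ` a set of `L`-formulas, and `∼` a `Σ`-bisimulation
on `M` that is also an equivalence relation.  Then: (1) if `⊑` is forth–up
confluent, so is the modal relation of `M/∼`; (2) if `⊑` is back–up confluent,
so is the modal relation of `M/∼`; (3) if `≼` is upward linear, so is the
intuitionistic relation of `M/∼`. -/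
theorem quotient_preserves_frame_conditions (M : KModel.{u}) (hM : M.IsBiInt)
    (S : Set Fml) (r : M.W → M.W → Prop) (hbis : M.IsBisim S r)
    (heq : Equivalence r) :
    (M.ForthUp → (M.QuotModel r).ForthUp) ∧
    (M.BackUp → (M.QuotModel r).BackUp) ∧
    (M.UpLinear → (M.QuotModel r).UpLinear) :=
  quotient_preserves_frame_conditions_general M S r hbis
end

section
/- Let M = (W, ≼, ⊑, V) be a model based on a downward-linear GS4 frame and let Σ be a finite subformula-closed set of L-formulas. For w ∈ W define ℓ(w) = {φ ∈ Σ : w ⊨ φ} and L(w) = {ℓ(v) : w ≼ v or v ≼ w}, and define w ≈ v iff ℓ(w) = ℓ(v) and L(w) = L(v). Then the quotient M/≈ has depth at most |Σ| + 1 and at most (|Σ|+1)·2^{|Σ|(|Σ|+1)+1} worlds. -/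
universe u

namespace KModel

/-- The strict order `w ≺ v`: `w ≼ v` but not `v ≼ w`. -/
def Slt (M : KModel.{u}) (w v : M.W) : Prop := M.le w v ∧ ¬ M.le v w

/-- The model has depth at most `n`: every chain `w₀ ≺ w₁ ≺ … ≺ w_m` has `m ≤ n`. -/
def DepthLE (M : KModel.{u}) (n : ℕ) : Prop :=
  ∀ (m : ℕ) (c : ℕ → M.W), (∀ i < m, M.Slt (c i) (c (i + 1))) → m ≤ n

/-- The model is shallow: its depth is finite. -/
def Shallow (M : KModel.{u}) : Prop := ∃ n : ℕ, M.DepthLE n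

/-- `≼` is downward linear. -/
def DownLinear (M : KModel.{u}) : Prop :=
  ∀ w u v, M.le u w → M.le v w → M.le u v ∨ M.le v u

/-- The model is forest-like: the set of `≼`-predecessors of any world is
totally ordered by `≼`. -/
def ForestLike (M : KModel.{u}) : Prop :=
  ∀ w u v, M.le u w → M.le v w → M.le u v ∨ M.le v u

end KModel

namespace KModel

/-- `L(w)`: the set of `Σ`-labels `ℓ(v)` of worlds `v` comparable with `w`. -/
def labNbhd (M : KModel.{u}) (S : Set Fml) (w : M.W) : Set (Set Fml) :=
  {X | ∃ v, (M.le w v ∨ M.le v w) ∧ X = M.labelPlus S v}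

/-- The relation `w ≈ v`: `ℓ(w) = ℓ(v)` and `L(w) = L(v)`. -/
def approxRel (M : KModel.{u}) (S : Set Fml) (w v : M.W) : Prop :=
  M.labelPlus S w = M.labelPlus S v ∧ M.labNbhd S w = M.labNbhd S v

end KModel

/-!
Persistence makes `ℓ` monotone along `≼`, and in an upward- and downward-linear frame any two
worlds comparable with `w` are comparable with each other. Hence `L(w)` is a `⊆`-chain of
subsets of `Σ` containing `ℓ(w)`, and it is constant along `≼`. So distinct classes
`[w] ≼ [v]` have `ℓ(w) ⊊ ℓ(v)`, which bounds the depth by `|Σ|`; and the class of `w` is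
determined by `|ℓ(w)|` together with the chain `L(w)`, in which `ℓ(w)` is the only member of
its size. A chain of subsets of a set of size `n` is determined by whether it contains `∅` and
by its member of each size `k ≤ n` (read as `∅` when there is none), so there are at most
`2 · (2 ^ n) ^ (n + 1)` such chains.
-/

section Chains

variable {α : Type*}

theorem IsChain.eq_of_ncard_eq {𝒞 : Set (Set α)} (h𝒞 : IsChain (· ⊆ ·) 𝒞) {X Y : Set α}
    (hX : X ∈ 𝒞) (hY : Y ∈ 𝒞) (hXfin : X.Finite) (hYfin : Y.Finite)
    (hXY : X.ncard = Y.ncard) : X = Y := by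
  rcases h𝒞.total hX hY with hsub | hsub
  · exact Set.eq_of_subset_of_ncard_le hsub hXY.ge hYfin
  · exact (Set.eq_of_subset_of_ncard_le hsub hXY.le hXfin).symm

/-- For a chain of finite sets: its member of size `k`, or `∅` if there is none. -/
def chainLevel (𝒞 : Set (Set α)) (k : ℕ) : Set α := ⋃₀ {X ∈ 𝒞 | X.ncard = k}

variable [Finite α] {𝒞 𝒟 : Set (Set α)}

theorem IsChain.chainLevel_ncard (h𝒞 : IsChain (· ⊆ ·) 𝒞) {X : Set α} (hX : X ∈ 𝒞) :
    chainLevel 𝒞 X.ncard = X := by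
  apply Set.Subset.antisymm
  · rintro a ⟨Y, ⟨hY, hYX⟩, haY⟩
    rwa [← h𝒞.eq_of_ncard_eq hX hY X.toFinite Y.toFinite hYX.symm] at haY
  · exact fun a ha => ⟨X, ⟨hX, rfl⟩, ha⟩

theorem IsChain.mem_iff_chainLevel_ncard (h𝒞 : IsChain (· ⊆ ·) 𝒞) {X : Set α}
    (hX : X.Nonempty) : X ∈ 𝒞 ↔ chainLevel 𝒞 X.ncard = X := by
  refine ⟨h𝒞.chainLevel_ncard, fun hlev => ?_⟩
  obtain ⟨a, ha⟩ := hX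
  rw [← hlev] at ha
  obtain ⟨Y, ⟨hY, hYX⟩, -⟩ := ha
  rwa [← hlev, ← hYX, h𝒞.chainLevel_ncard hY]

theorem IsChain.ext_of_chainLevel (h𝒞 : IsChain (· ⊆ ·) 𝒞) (h𝒟 : IsChain (· ⊆ ·) 𝒟)
    (hempty : ∅ ∈ 𝒞 ↔ ∅ ∈ 𝒟) (hlev : ∀ k ≤ Nat.card α, chainLevel 𝒞 k = chainLevel 𝒟 k) :
    𝒞 = 𝒟 := by
  ext X
  rcases X.eq_empty_or_nonempty with rfl | hX
  · exact hempty
  · rw [h𝒞.mem_iff_chainLevel_ncard hX, h𝒟.mem_iff_chainLevel_ncard hX,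
      hlev _ X.ncard_le_card]

theorem card_chains_le :
    Nat.card {𝒞 : Set (Set α) // IsChain (· ⊆ ·) 𝒞} ≤
      2 ^ (Nat.card α * (Nat.card α + 1) + 1) := by
  let code : {𝒞 : Set (Set α) // IsChain (· ⊆ ·) 𝒞} → Prop × (Fin (Nat.card α + 1) → Set α) :=
    fun 𝒞 => (∅ ∈ 𝒞.1, fun k => chainLevel 𝒞.1 k)
  have hcode : Function.Injective code := fun 𝒞 𝒟 h => Subtype.ext <|
    𝒞.2.ext_of_chainLevel 𝒟.2 (Prod.ext_iff.1 h).1.to_iff fun k hk =>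
      congrFun (Prod.ext_iff.1 h).2 ⟨k, Nat.lt_succ_of_le hk⟩
  have hProp : Nat.card Prop = 2 := by simp [Nat.card_eq_fintype_card]
  calc Nat.card {𝒞 : Set (Set α) // IsChain (· ⊆ ·) 𝒞}
      ≤ Nat.card (Prop × (Fin (Nat.card α + 1) → α → Prop)) :=
        Nat.card_le_card_of_injective code hcode
    _ = 2 ^ (Nat.card α * (Nat.card α + 1) + 1) := by
        rw [Nat.card_prod, Nat.card_fun, Nat.card_fun, hProp, Nat.card_fin, ← pow_mul,
          ← pow_succ']

end Chains

namespace KModel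

variable {M : KModel.{u}}

theorem IsBiInt.le_trans_s15 (hM : M.IsBiInt) {u v w : M.W} (huv : M.le u v) (hvw : M.le v w) :
    M.le u w :=
  hM.2.1 u v w huv hvw

theorem IsBiInt.sat_of_le (hM : M.IsBiInt) (φ : Fml) {w v : M.W} (hwv : M.le w v)
    (hw : M.Sat φ w) : M.Sat φ v := by
  obtain ⟨-, htrans, -, -, hfall, -, hval, -⟩ := hM
  induction φ generalizing w v with
  | var p => exact hval p w v hw hwv
  | bot => exact hfall w v hw hwv
  | and φ ψ ihφ ihψ => exact ⟨ihφ hwv hw.1, ihψ hwv hw.2⟩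
  | or φ ψ ihφ ihψ => exact hw.imp (ihφ hwv) (ihψ hwv)
  | imp φ ψ => exact fun u hvu => hw u (htrans w v u hwv hvu)
  | dia φ => exact fun u hvu => hw u (htrans w v u hwv hvu)
  | box φ => exact fun u x hvu => hw u x (htrans w v u hwv hvu)

theorem IsBiInt.labelPlus_mono (hM : M.IsBiInt) (S : Set Fml) {w v : M.W} (hwv : M.le w v) :
    M.labelPlus S w ⊆ M.labelPlus S v :=
  fun φ hφ => ⟨hφ.1, hM.sat_of_le φ hwv hφ.2⟩

theorem labelPlus_subset (S : Set Fml) (w : M.W) : M.labelPlus S w ⊆ S := fun _ hφ => hφ.1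

theorem labelPlus_mem_labNbhd (hM : M.IsBiInt) (S : Set Fml) (w : M.W) :
    M.labelPlus S w ∈ M.labNbhd S w :=
  ⟨w, Or.inl (hM.le_refl w), rfl⟩

theorem labNbhd_subset_powerset (S : Set Fml) (w : M.W) : M.labNbhd S w ⊆ 𝒫 S := by
  rintro _ ⟨v, -, rfl⟩
  exact labelPlus_subset S v

theorem QuotModel.mk_le_mk (r : M.W → M.W → Prop) {w v : M.W} (hwv : M.le w v) :
    (M.QuotModel r).le (Quot.mk r w) (Quot.mk r v) := by
  unfold QuotModel
  exact ⟨w, v, rfl, rfl, hwv⟩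

noncomputable def labelCard (S : Set Fml) : Quot (M.approxRel S) → ℕ :=
  Quot.lift (fun w => (M.labelPlus S w).ncard) fun _ _ h => congrArg Set.ncard h.1

theorem labelCard_le (S : Finset Fml) (x : Quot (M.approxRel ↑S)) :
    labelCard (↑S) x ≤ S.card := by
  induction x using Quot.ind with
  | mk w => exact (Set.ncard_coe_finset S).le.trans' (Set.ncard_le_ncard (labelPlus_subset _ w))

theorem DepthLE.mono {m n : ℕ} (h : M.DepthLE m) (hmn : m ≤ n) : M.DepthLE n :=
  fun k c hc => (h k c hc).trans hmn

theorem depthLE_of_strictMono_rank {n : ℕ} (f : M.W → ℕ) (hf : ∀ x, f x ≤ n)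
    (hlt : ∀ x y, M.Slt x y → f x < f y) : M.DepthLE n := by
  intro m c hc
  have hrank : ∀ i ≤ m, i ≤ f (c i) := by
    intro i hi
    induction i with
    | zero => exact Nat.zero_le _
    | succ i ih => exact (ih (by omega)).trans_lt (hlt _ _ (hc i (by omega)))
  exact (hrank m le_rfl).trans (hf (c m))

section Linear

variable (hM : M.IsBiInt) (hup : M.UpLinear) (hdl : M.DownLinear)
include hM hup hdl

theorem le_total_of_comparable {w a b : M.W} (ha : M.le w a ∨ M.le a w)
    (hb : M.le w b ∨ M.le b w) : M.le a b ∨ M.le b a := by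
  rcases ha with ha | ha <;> rcases hb with hb | hb
  · exact hup w a b ha hb
  · exact Or.inr (hM.le_trans_s15 hb ha)
  · exact Or.inl (hM.le_trans_s15 ha hb)
  · exact hdl w a b ha hb

theorem isChain_labNbhd (S : Set Fml) (w : M.W) : IsChain (· ⊆ ·) (M.labNbhd S w) := by
  rintro _ ⟨a, ha, rfl⟩ _ ⟨b, hb, rfl⟩ -
  exact (le_total_of_comparable hM hup hdl ha hb).imp
    (hM.labelPlus_mono S) (hM.labelPlus_mono S)

theorem labNbhd_eq_of_le (S : Set Fml) {w v : M.W} (hwv : M.le w v) :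
    M.labNbhd S w = M.labNbhd S v := by
  ext X
  constructor
  · rintro ⟨u, hu | hu, rfl⟩
    · exact ⟨u, (hup w u v hu hwv).symm, rfl⟩
    · exact ⟨u, Or.inr (hM.le_trans_s15 hu hwv), rfl⟩
  · rintro ⟨u, hu | hu, rfl⟩
    · exact ⟨u, Or.inl (hM.le_trans_s15 hwv hu), rfl⟩
    · exact ⟨u, hdl v w u hwv hu, rfl⟩

theorem approxRel_of_ncard_eq {S : Set Fml} (hS : S.Finite) {w v : M.W}
    (hcard : (M.labelPlus S w).ncard = (M.labelPlus S v).ncard)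
    (hL : M.labNbhd S w = M.labNbhd S v) : M.approxRel S w v := by
  refine ⟨(isChain_labNbhd hM hup hdl S w).eq_of_ncard_eq (labelPlus_mem_labNbhd hM S w) ?_
    (hS.subset (labelPlus_subset S w)) (hS.subset (labelPlus_subset S v)) hcard, hL⟩
  exact hL ▸ labelPlus_mem_labNbhd hM S v

theorem labelCard_lt_of_slt {S : Set Fml} (hS : S.Finite)
    {x y : (M.QuotModel (M.approxRel S)).W} (h : (M.QuotModel (M.approxRel S)).Slt x y) :
    labelCard S x < labelCard S y := by
  obtain ⟨⟨w, v, rfl, rfl, hwv⟩, hnot⟩ := h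
  refine Set.ncard_lt_ncard (ssubset_of_subset_of_ne (hM.labelPlus_mono S hwv) fun hℓ => hnot ?_)
    (hS.subset (labelPlus_subset S v))
  have hwv' : Quot.mk (M.approxRel S) w = Quot.mk _ v :=
    Quot.sound ⟨hℓ, labNbhd_eq_of_le hM hup hdl S hwv⟩
  rw [← hwv']
  exact QuotModel.mk_le_mk _ (hM.le_refl w)

theorem depthLE_quotModel_approxRel (S : Finset Fml) :
    (M.QuotModel (M.approxRel ↑S)).DepthLE S.card :=
  depthLE_of_strictMono_rank (labelCard ↑S) (labelCard_le S) fun _ _ =>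
    labelCard_lt_of_slt hM hup hdl S.finite_toSet

theorem exists_injective_quot_approxRel (S : Finset Fml) :
    ∃ F : Quot (M.approxRel ↑S) →
      Fin (S.card + 1) × {𝒞 : Set (Set (↑S : Set Fml)) // IsChain (· ⊆ ·) 𝒞},
      Function.Injective F := by
  let code (w : M.W) :
      Fin (S.card + 1) × {𝒞 : Set (Set (↑S : Set Fml)) // IsChain (· ⊆ ·) 𝒞} :=
    (⟨labelCard ↑S (Quot.mk _ w), Nat.lt_succ_of_le (labelCard_le S _)⟩,
      ⟨(Subtype.val ⁻¹' ·) '' M.labNbhd ↑S w,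
        IsChain.image_of_map_rel (· ⊆ ·) (· ⊆ ·) (Subtype.val ⁻¹' · : Set Fml → Set ↑S)
          (fun _ _ => Set.preimage_mono)
          (isChain_labNbhd hM hup hdl ↑S w)⟩)
  have hinj : Set.InjOn (Subtype.val ⁻¹' · : Set Fml → Set (↑S : Set Fml)) (𝒫 ↑S) :=
    fun X hX Y hY h => by
      rwa [Subtype.preimage_coe_eq_preimage_coe_iff, Set.inter_eq_right.2 hX,
        Set.inter_eq_right.2 hY] at h
  refine ⟨Quot.lift code fun w v h => ?_, fun x y h => ?_⟩
  · exact Prod.ext (Fin.ext (congrArg Set.ncard h.1)) (Subtype.ext (congrArg (Set.image _) h.2))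
  · induction x using Quot.ind with | mk w => ?_
    induction y using Quot.ind with | mk v => ?_
    obtain ⟨hcard, hL⟩ := Prod.ext_iff.1 h
    refine Quot.sound (approxRel_of_ncard_eq hM hup hdl S.finite_toSet (Fin.ext_iff.1 hcard) ?_)
    exact (hinj.image_eq_image_iff (labNbhd_subset_powerset _ w) (labNbhd_subset_powerset _ v)).1
      (Subtype.ext_iff.1 hL)

theorem card_quotModel_approxRel_le (S : Finset Fml) :
    Finite (M.QuotModel (M.approxRel ↑S)).W ∧
    Nat.card (M.QuotModel (M.approxRel ↑S)).W ≤
      (S.card + 1) * 2 ^ (S.card * (S.card + 1) + 1) := by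
  obtain ⟨F, hF⟩ := exists_injective_quot_approxRel hM hup hdl S
  have hS : Nat.card (↑S : Set Fml) = S.card := by
    rw [Nat.card_coe_set_eq, Set.ncard_coe_finset]
  refine ⟨Finite.of_injective F hF, ?_⟩
  calc Nat.card (M.QuotModel (M.approxRel ↑S)).W
      ≤ Nat.card (Fin (S.card + 1) × {𝒞 : Set (Set (↑S : Set Fml)) // IsChain (· ⊆ ·) 𝒞}) :=
        Nat.card_le_card_of_injective F hF
    _ ≤ (S.card + 1) * 2 ^ (S.card * (S.card + 1) + 1) := by
        rw [Nat.card_prod, Nat.card_fin, ← hS]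
        exact Nat.mul_le_mul_left _ card_chains_le

end Linear

end KModel

theorem gs4_quotient_bound_general (M : KModel.{u}) (hM : M.IsGS4) (hdl : M.DownLinear)
    (S : Finset Fml) :
    (M.QuotModel (M.approxRel ↑S)).DepthLE (S.card + 1) ∧
    Finite (M.QuotModel (M.approxRel ↑S)).W ∧
    Nat.card (M.QuotModel (M.approxRel ↑S)).W ≤
      (S.card + 1) * 2 ^ (S.card * (S.card + 1) + 1) := by
  have hbi : M.IsBiInt := hM.1.1.1
  exact ⟨(KModel.depthLE_quotModel_approxRel hbi hM.2 hdl S).mono S.card.le_succ,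
    KModel.card_quotModel_approxRel_le hbi hM.2 hdl S⟩

/-- **Size of the quotient of a downward-linear GS4 model.** Let `M` be a model
based on a downward-linear GS4 frame and `Σ` a finite subformula-closed set of
`L`-formulas.  Define `ℓ(w) = {φ ∈ Σ : w ⊨ φ}`, `L(w) = {ℓ(v) : w ≼ v or v ≼ w}`
and `w ≈ v` iff `ℓ(w) = ℓ(v)` and `L(w) = L(v)`.  Then the quotient `M/≈` has
depth at most `|Σ| + 1` and at most `(|Σ|+1) · 2^{|Σ|(|Σ|+1)+1}` worlds. -/
theorem gs4_quotient_bound (M : KModel.{u}) (hM : M.IsGS4) (hdl : M.DownLinear)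
    (S : Finset Fml) (hS : SubClosed ↑S) :
    (M.QuotModel (M.approxRel ↑S)).DepthLE (S.card + 1) ∧
    Finite (M.QuotModel (M.approxRel ↑S)).W ∧
    Nat.card (M.QuotModel (M.approxRel ↑S)).W ≤
      (S.card + 1) * 2 ^ (S.card * (S.card + 1) + 1) :=
  gs4_quotient_bound_general M hM hdl S
end
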